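/- arXiv:1408.4048 — 9 statements merged into one kernel-verified Lean document; each statement's English description precedes it below -/
import Mathlib

section
/- Let (A, B, E, Σ_A, Σ_B, {π_e}) be a satisfiable projection game with E nonempty, witnessed by a fully satisfying assignment (φ_A^{OPT}, φ_B^{OPT}), and let p̄ = (1/|E|) · Σ_{(a,b) ∈ E} |π_{(a,b)}^{-1}(φ_B^{OPT}(b))|. Let φ_B* : B → Σ_B be any assignment such that for every b ∈ B and every σ ∈ Σ_B one has Σ_{a ∈ N(b)} |π_{(a,b)}^{-1}(φ_B*(b))| ≥ Σ_{a ∈ N(b)} |π_{(a,b)}^{-1}(σ)|. Then there exists φ_A : A → Σ_A such that the number of edges satisfied by (φ_A, φ_B*) is at least |E| · p̄ / |Σ_A|. -/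
/-!
Give every vertex `a ∈ A` the label that satisfies the most edges at `a`, given `φB*`. Since the best
of `|Σ_A|` labels does at least as well as their average, the edges satisfied number at least
`(1/|Σ_A|) Σ_e |π_e⁻¹(φB*(b))|`. Summing the maximality of `φB*` over `b` bounds this sum from below
by `Σ_e |π_e⁻¹(φB^OPT(b))| = |E| p̄`.
-/

open Finset

namespace ProjectionGame

variable {A B LA LB : Type} [Fintype A] [DecidableEq A] [DecidableEq LB]
  (E : Finset (A × B)) (π : A × B → LA → LB)

def edgesSatisfiedAt (φB : B → LB) (a : A) (s : LA) : ℕ :=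
  #{e ∈ E | e.1 = a ∧ π e s = φB e.2}

theorem card_satisfied_eq_sum_edgesSatisfiedAt (φA : A → LA) (φB : B → LB) :
    #{e ∈ E | π e (φA e.1) = φB e.2} = ∑ a, edgesSatisfiedAt E π φB a (φA a) := by
  rw [card_eq_sum_card_fiberwise (f := Prod.fst) (t := univ) fun _ _ => mem_univ _]
  refine sum_congr rfl fun a _ => ?_
  rw [edgesSatisfiedAt, filter_filter]
  congr 1
  refine filter_congr fun e _ => ?_
  constructor
  · rintro ⟨he, rfl⟩
    exact ⟨rfl, he⟩
  · rintro ⟨rfl, he⟩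
    exact ⟨he, rfl⟩

theorem sum_card_preimage_eq_sum_edgesSatisfiedAt [Fintype LA] (φB : B → LB) :
    ∑ e ∈ E, #{s | π e s = φB e.2} = ∑ a, ∑ s, edgesSatisfiedAt E π φB a s := by
  rw [← sum_fiberwise E Prod.fst]
  refine sum_congr rfl fun a _ => ?_
  simp only [edgesSatisfiedAt, ← filter_filter, card_filter]
  exact sum_comm

theorem exists_assignment_sum_card_preimage_le [Fintype LA] [Nonempty LA] (φB : B → LB) :
    ∃ φA : A → LA, ∑ e ∈ E, #{s | π e s = φB e.2} ≤
      Fintype.card LA * #{e ∈ E | π e (φA e.1) = φB e.2} := by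
  choose φA hφA using fun a => Finite.exists_max (edgesSatisfiedAt E π φB a)
  refine ⟨φA, ?_⟩
  rw [sum_card_preimage_eq_sum_edgesSatisfiedAt, card_satisfied_eq_sum_edgesSatisfiedAt, mul_sum]
  exact sum_le_sum fun a _ => sum_le_card_nsmul _ _ _ fun s _ => hφA a s

theorem sum_card_preimage_le_of_forall_le [Fintype LA] [Fintype B] [DecidableEq B]
    (φB φB' : B → LB)
    (hle : ∀ b, ∑ a ∈ univ.filter (fun a => (a, b) ∈ E), #{s | π (a, b) s = φB b} ≤
      ∑ a ∈ univ.filter (fun a => (a, b) ∈ E), #{s | π (a, b) s = φB' b}) :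
    ∑ e ∈ E, #{s | π e s = φB e.2} ≤ ∑ e ∈ E, #{s | π e s = φB' e.2} := by
  have hE : ∀ e : A × B, e ∈ E ↔ e.2 ∈ univ ∧ e.1 ∈ univ.filter (fun a => (a, e.2) ∈ E) := by
    simp
  rw [sum_finset_product_right E univ (fun b => univ.filter fun a => (a, b) ∈ E) hE,
    sum_finset_product_right E univ (fun b => univ.filter fun a => (a, b) ∈ E) hE]
  exact sum_le_sum fun b _ => hle b

end ProjectionGame

theorem stmt_2_general {A B LA LB : Type} [Fintype A] [Fintype B] [Fintype LA]
    [DecidableEq A] [DecidableEq B] [DecidableEq LB]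
    (E : Finset (A × B)) (π : A × B → LA → LB)
    (φAopt : A → LA) (φBopt : B → LB)
    (pbar : ℝ)
    (hpbar : pbar = (∑ e ∈ E,
        ((Finset.univ.filter fun s : LA => π e s = φBopt e.2).card : ℝ)) / E.card)
    (φBstar : B → LB)
    (hmax : ∀ (b : B) (σ : LB),
      ∑ a ∈ Finset.univ.filter (fun a : A => (a, b) ∈ E),
          (Finset.univ.filter fun s : LA => π (a, b) s = σ).card ≤
        ∑ a ∈ Finset.univ.filter (fun a : A => (a, b) ∈ E),
          (Finset.univ.filter fun s : LA => π (a, b) s = φBstar b).card) :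
    ∃ φA : A → LA,
      (E.card : ℝ) * pbar / (Fintype.card LA) ≤
        ((E.filter fun e => π e (φA e.1) = φBstar e.2).card : ℝ) := by
  obtain hLA | hLA := isEmpty_or_nonempty LA
  · -- the bound is `_ / 0 = 0`
    exact ⟨φAopt, by simp⟩
  obtain ⟨φA, hφA⟩ := ProjectionGame.exists_assignment_sum_card_preimage_le E π φBstar
  refine ⟨φA, ?_⟩
  have hopt := ProjectionGame.sum_card_preimage_le_of_forall_le E π φBopt φBstar
    fun b => hmax b (φBopt b)
  have hcancel : (E.card : ℝ) = 0 →
      ∑ e ∈ E, ((Finset.univ.filter fun s : LA => π e s = φBopt e.2).card : ℝ) = 0 :=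
    fun hE => by simp [Finset.card_eq_zero.1 (by exact_mod_cast hE)]
  rw [hpbar, mul_div_cancel_of_imp' hcancel, div_le_iff₀ (by exact_mod_cast Fintype.card_pos),
    mul_comm]
  exact_mod_cast hopt.trans hφA

/-- greedy assignment guarantee `|E|·p̄/|Σ_A|` for satisfiable projection
games. -/
theorem stmt_2 {A B LA LB : Type} [Fintype A] [Fintype B] [Fintype LA] [Fintype LB]
    [DecidableEq A] [DecidableEq B] [DecidableEq LA] [DecidableEq LB]
    (E : Finset (A × B)) (π : A × B → LA → LB)
    (hE : E.Nonempty)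
    (φAopt : A → LA) (φBopt : B → LB)
    (hopt : ∀ e ∈ E, π e (φAopt e.1) = φBopt e.2)
    (pbar : ℝ)
    (hpbar : pbar = (∑ e ∈ E,
        ((Finset.univ.filter fun s : LA => π e s = φBopt e.2).card : ℝ)) / E.card)
    (φBstar : B → LB)
    (hmax : ∀ (b : B) (σ : LB),
      ∑ a ∈ Finset.univ.filter (fun a : A => (a, b) ∈ E),
          (Finset.univ.filter fun s : LA => π (a, b) s = σ).card ≤
        ∑ a ∈ Finset.univ.filter (fun a : A => (a, b) ∈ E),
          (Finset.univ.filter fun s : LA => π (a, b) s = φBstar b).card) :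
    ∃ φA : A → LA,
      (E.card : ℝ) * pbar / (Fintype.card LA) ≤
        ((E.filter fun e => π e (φA e.1) = φBstar e.2).card : ℝ) :=
  stmt_2_general E π φAopt φBopt pbar hpbar φBstar hmax
end

section
/- Let (A, B, E, Σ_A, Σ_B, {π_e}) be a satisfiable projection game with fully satisfying assignment (φ_A^{OPT}, φ_B^{OPT}), and suppose the preimage sizes are uniform: there is a number p̄ ≥ 1 such that |π_{(a,b)}^{-1}(φ_B^{OPT}(b))| = p̄ for every edge (a,b) ∈ E. Fix a₀ ∈ A, and for each b ∈ N(a₀) let σ_b = π_{(a₀,b)}(φ_A^{OPT}(a₀)). For each a ∈ A define S_a = {σ ∈ Σ_A : π_{(a,b)}(σ) = σ_b for all b ∈ N(a) ∩ N(a₀)}. Let h(a₀) be the number of edges of E having at least one endpoint in N₂(a₀). Then for every φ_B* : B → Σ_B such that for each b ∈ B the value φ_B*(b) maximizes Σ_{a ∈ N(b) ∩ N₂(a₀)} |π_{(a,b)}^{-1}(σ) ∩ S_a| over all σ ∈ Σ_B, there exists φ_A : A → Σ_A with φ_A(a) ∈ S_a for every a ∈ A such that the number of edges satisfied by (φ_A,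 φ_B*) is at least h(a₀)/p̄. -/
/-!
Choose `φA a ∈ S_a` greedily, maximising the number of edges at `a` it satisfies against
`φB*`. Every `S_a` contains `φA^OPT a`, so each edge `(a, b)` with `a ∈ N₂(a₀)` has weight
`|π⁻¹(φB^OPT b) ∩ S_a| ≥ 1`; by the maximality of `φB*` the total weight is at least as large
at `φB*`, giving `h(a₀) ≤ ∑_e |π_e⁻¹(φB* b) ∩ S_a|`. Double counting turns this sum into
`∑_a ∑_{s ∈ S_a} (edges at a satisfied by s)`, and the greedy choice bounds the inner sum by
`|S_a|` times the edges satisfied by `φA a`. Finally `|S_a| ≤ p̄` for `a ∈ N₂(a₀)`, since `S_a`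
lies in the preimage of `φB^OPT b` along an edge to a common neighbour `b` of `a` and `a₀`.
-/

open Finset

namespace ProjectionGame

variable {A B LA LB : Type*} [DecidableEq A] (E : Finset (A × B)) (π : A × B → LA → LB)

section Regrouping

variable [DecidableEq B] [Fintype B]

lemma sum_filter_fst_mem_eq_sum_sum {M : Type*} [AddCommMonoid M] (N : Finset A)
    (f : A × B → M) :
    ∑ e ∈ E.filter (fun e => e.1 ∈ N), f e =
      ∑ a ∈ N, ∑ b ∈ univ.filter (fun b => (a, b) ∈ E), f (a, b) :=
  sum_finset_product _ _ _ fun e => by simp [and_comm]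

lemma sum_filter_fst_mem_eq_sum_snd [Fintype A] {M : Type*} [AddCommMonoid M]
    (N : Finset A) (f : A × B → M) :
    ∑ e ∈ E.filter (fun e => e.1 ∈ N), f e =
      ∑ b, ∑ a ∈ univ.filter (fun a => (a, b) ∈ E ∧ a ∈ N), f (a, b) :=
  sum_finset_product_right _ _ _ fun e => by simp

end Regrouping

section Weights

variable [Fintype LA] [DecidableEq LA] [DecidableEq LB]

/-- The weight `|π_e⁻¹(σ) ∩ S_a|` of the label `σ` on the edge `e = (a, b)`. -/
def preimageWeight (S : A → Finset LA) (e : A × B) (σ : LB) : ℕ :=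
  ((univ.filter fun s => π e s = σ) ∩ S e.1).card

lemma card_filter_fst_mem_le_sum_preimageWeight (S : A → Finset LA) (N : Finset A)
    {φA : A → LA} {φB : B → LB} (hsat : ∀ e ∈ E, π e (φA e.1) = φB e.2)
    (hφA : ∀ a, φA a ∈ S a) :
    (E.filter fun e => e.1 ∈ N).card ≤
      ∑ e ∈ E.filter (fun e => e.1 ∈ N), preimageWeight π S e (φB e.2) := by
  rw [card_eq_sum_ones]
  refine sum_le_sum fun e he => card_pos.mpr ⟨φA e.1, ?_⟩
  simpa [hφA] using hsat e (mem_filter.mp he).1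

variable [DecidableEq B] [Fintype B]

lemma sum_preimageWeight_le_of_maximizer [Fintype A] (S : A → Finset LA) (N : Finset A)
    (φB φB' : B → LB)
    (hmax : ∀ b σ,
      ∑ a ∈ univ.filter (fun a => (a, b) ∈ E ∧ a ∈ N), preimageWeight π S (a, b) σ ≤
        ∑ a ∈ univ.filter (fun a => (a, b) ∈ E ∧ a ∈ N), preimageWeight π S (a, b) (φB' b)) :
    ∑ e ∈ E.filter (fun e => e.1 ∈ N), preimageWeight π S e (φB e.2) ≤
      ∑ e ∈ E.filter (fun e => e.1 ∈ N), preimageWeight π S e (φB' e.2) := by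
  simp only [sum_filter_fst_mem_eq_sum_snd E N (M := ℕ)]
  exact sum_le_sum fun b _ => hmax b (φB b)

end Weights

section Satisfaction

variable [DecidableEq B] [DecidableEq LB] [Fintype B] (φB : B → LB)

/-- The number of edges at `a` satisfied against `φB` when `a` is labelled `s`. -/
def satCount (a : A) (s : LA) : ℕ :=
  (univ.filter fun b => (a, b) ∈ E ∧ π (a, b) s = φB b).card

lemma sum_satCount_le_card_satisfied (N : Finset A) (φA : A → LA) :
    ∑ a ∈ N, satCount E π φB a (φA a) ≤
      (E.filter fun e => π e (φA e.1) = φB e.2).card := by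
  have := sum_filter_fst_mem_eq_sum_sum (E.filter fun e => π e (φA e.1) = φB e.2) N fun _ => 1
  simp only [← card_eq_sum_ones, mem_filter] at this
  exact this ▸ card_le_card (filter_subset _ _)

variable [Fintype LA] [DecidableEq LA] (S : A → Finset LA)

lemma sum_preimageWeight_eq_sum_satCount (a : A) :
    ∑ b ∈ univ.filter (fun b => (a, b) ∈ E), preimageWeight π S (a, b) (φB b) =
      ∑ s ∈ S a, satCount E π φB a s := by
  have := sum_card_bipartiteAbove_eq_sum_card_bipartiteBelow
    (s := S a) (t := univ.filter fun b => (a, b) ∈ E) (fun s b => π (a, b) s = φB b)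
  simp only [bipartiteAbove, bipartiteBelow, filter_filter] at this
  simp only [preimageWeight, satCount, this, filter_inter, univ_inter]

lemma exists_mem_sum_preimageWeight_le (a : A) (ha : (S a).Nonempty) :
    ∃ s ∈ S a, ∑ b ∈ univ.filter (fun b => (a, b) ∈ E), preimageWeight π S (a, b) (φB b) ≤
      (S a).card * satCount E π φB a s := by
  obtain ⟨s, hs, hmax⟩ := exists_max_image (S a) (satCount E π φB a) ha
  refine ⟨s, hs, ?_⟩
  rw [sum_preimageWeight_eq_sum_satCount]
  simpa using sum_le_card_nsmul (S a) _ _ hmax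

lemma exists_assignment_sum_preimageWeight_le (hS : ∀ a, (S a).Nonempty) (N : Finset A) :
    ∃ φA : A → LA, (∀ a, φA a ∈ S a) ∧
      ∑ e ∈ E.filter (fun e => e.1 ∈ N), preimageWeight π S e (φB e.2) ≤
        ∑ a ∈ N, (S a).card * satCount E π φB a (φA a) := by
  choose φA hφA hle using fun a => exists_mem_sum_preimageWeight_le E π φB S a (hS a)
  refine ⟨φA, hφA, ?_⟩
  rw [sum_filter_fst_mem_eq_sum_sum]
  exact sum_le_sum fun a _ => hle a

theorem exists_assignment_sum_preimageWeight_le_mul (hS : ∀ a, (S a).Nonempty)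
    (N : Finset A) {p : ℝ} (hp₀ : 0 ≤ p) (hp : ∀ a ∈ N, ((S a).card : ℝ) ≤ p) :
    ∃ φA : A → LA, (∀ a, φA a ∈ S a) ∧
      (∑ e ∈ E.filter (fun e => e.1 ∈ N), preimageWeight π S e (φB e.2) : ℝ) ≤
        p * (E.filter fun e => π e (φA e.1) = φB e.2).card := by
  obtain ⟨φA, hφA, hle⟩ := exists_assignment_sum_preimageWeight_le E π φB S hS N
  refine ⟨φA, hφA, ?_⟩
  calc (∑ e ∈ E.filter (fun e => e.1 ∈ N), preimageWeight π S e (φB e.2) : ℝ)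
      ≤ ∑ a ∈ N, ((S a).card : ℝ) * satCount E π φB a (φA a) := mod_cast hle
    _ ≤ ∑ a ∈ N, p * satCount E π φB a (φA a) :=
        sum_le_sum fun a ha => mul_le_mul_of_nonneg_right (hp a ha) (Nat.cast_nonneg _)
    _ = p * ∑ a ∈ N, (satCount E π φB a (φA a) : ℝ) := (mul_sum ..).symm
    _ ≤ p * (E.filter fun e => π e (φA e.1) = φB e.2).card :=
        mul_le_mul_of_nonneg_left (mod_cast sum_satCount_le_card_satisfied E π φB N φA) hp₀

end Satisfaction

section Neighbourhood

variable [DecidableEq B] [Fintype B]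

/-- The set `N₂(a₀)` of the paper. -/
def secondNeighbors [Fintype A] (a₀ : A) : Finset A :=
  univ.filter fun a => ∃ b, (a, b) ∈ E ∧ (a₀, b) ∈ E

variable [Fintype LA] [DecidableEq LB]

/-- The set `S_a` of the paper, for `s₀ = φA^OPT a₀`. -/
def compatibleLabels (a₀ : A) (s₀ : LA) (a : A) : Finset LA :=
  univ.filter fun s => ∀ b, (a, b) ∈ E → (a₀, b) ∈ E → π (a, b) s = π (a₀, b) s₀

lemma mem_compatibleLabels {φA : A → LA} {φB : B → LB}
    (hsat : ∀ e ∈ E, π e (φA e.1) = φB e.2) (a₀ a : A) :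
    φA a ∈ compatibleLabels E π a₀ (φA a₀) a := by
  simp only [compatibleLabels, mem_filter, mem_univ, true_and]
  intro b hab ha₀b
  rw [hsat _ hab, hsat _ ha₀b]

lemma card_compatibleLabels_le [Fintype A] {φA : A → LA} {φB : B → LB}
    (hsat : ∀ e ∈ E, π e (φA e.1) = φB e.2) {p : ℝ}
    (hp : ∀ e ∈ E, ((univ.filter fun s => π e s = φB e.2).card : ℝ) = p)
    {a₀ a : A} (ha : a ∈ secondNeighbors E a₀) :
    ((compatibleLabels E π a₀ (φA a₀) a).card : ℝ) ≤ p := by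
  obtain ⟨b, hab, ha₀b⟩ := (mem_filter.mp ha).2
  rw [← hp _ hab]
  refine mod_cast card_le_card fun s hs => ?_
  simp only [compatibleLabels, mem_filter, mem_univ, true_and] at hs ⊢
  rw [hs b hab ha₀b, hsat _ ha₀b]

end Neighbourhood

end ProjectionGame

open ProjectionGame in
/-- "know your neighbors' neighbors" guarantee `h(a₀)/p̄` for satisfiable
projection games with uniform preimage sizes. -/
theorem stmt_3 {A B LA LB : Type} [Fintype A] [Fintype B] [Fintype LA] [Fintype LB]
    [DecidableEq A] [DecidableEq B] [DecidableEq LA] [DecidableEq LB]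
    (E : Finset (A × B)) (π : A × B → LA → LB)
    (φAopt : A → LA) (φBopt : B → LB)
    (hopt : ∀ e ∈ E, π e (φAopt e.1) = φBopt e.2)
    (pbar : ℝ) (hpbar1 : 1 ≤ pbar)
    (hunif : ∀ e ∈ E,
      ((Finset.univ.filter fun s : LA => π e s = φBopt e.2).card : ℝ) = pbar)
    (a₀ : A)
    (Sa : A → Finset LA)
    (hSa : ∀ a : A, Sa a = Finset.univ.filter fun s : LA =>
      ∀ b : B, (a, b) ∈ E → (a₀, b) ∈ E → π (a, b) s = π (a₀, b) (φAopt a₀))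
    (N₂ : Finset A)
    (hN₂ : N₂ = Finset.univ.filter fun a : A => ∃ b : B, (a, b) ∈ E ∧ (a₀, b) ∈ E)
    (h₀ : ℕ) (hh₀ : h₀ = (E.filter fun e => e.1 ∈ N₂).card)
    (φBstar : B → LB)
    (hmaxStar : ∀ (b : B) (σ : LB),
      ∑ a ∈ Finset.univ.filter (fun a : A => (a, b) ∈ E ∧ a ∈ N₂),
          ((Finset.univ.filter fun s : LA => π (a, b) s = σ) ∩ Sa a).card ≤
        ∑ a ∈ Finset.univ.filter (fun a : A => (a, b) ∈ E ∧ a ∈ N₂),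
          ((Finset.univ.filter fun s : LA => π (a, b) s = φBstar b) ∩ Sa a).card) :
    ∃ φA : A → LA, (∀ a : A, φA a ∈ Sa a) ∧
      (h₀ : ℝ) / pbar ≤
        ((E.filter fun e => π e (φA e.1) = φBstar e.2).card : ℝ) := by
  obtain rfl : Sa = compatibleLabels E π a₀ (φAopt a₀) := funext hSa
  obtain rfl : N₂ = secondNeighbors E a₀ := hN₂
  have hoptS (a : A) : φAopt a ∈ compatibleLabels E π a₀ (φAopt a₀) a :=
    mem_compatibleLabels E π hopt a₀ a
  have hcard (a : A) (ha : a ∈ secondNeighbors E a₀) :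
      ((compatibleLabels E π a₀ (φAopt a₀) a).card : ℝ) ≤ pbar :=
    card_compatibleLabels_le E π hopt hunif ha
  obtain ⟨φA, hφA, hsat⟩ := exists_assignment_sum_preimageWeight_le_mul E π φBstar _
    (fun a => ⟨_, hoptS a⟩) _ (by linarith) hcard
  refine ⟨φA, hφA, (div_le_iff₀' (by linarith)).mpr (le_trans ?_ hsat)⟩
  rw [hh₀]
  exact mod_cast (card_filter_fst_mem_le_sum_preimageWeight E π _ _ hopt hoptS).trans
    (sum_preimageWeight_le_of_maximizer E π _ _ φBopt φBstar hmaxStar)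
end

section
/- Let G = (A, B, E) be a finite bipartite graph with E ⊆ A × B and B nonempty, and let W ⊆ A ∪ B be any set of vertices. Then Σ_{a ∈ A} |E_{(N(a) ∪ N₂(a)) ∖ W}| ≥ |E_{(A ∪ B) ∖ W}|² / |B|. -/
/-!
Let `F` be the edges avoiding `W`. For `a ∈ A`, the edges of `F` whose `B`-endpoint is a neighbour
of `a` all lie in `E_{(N(a) ∪ N₂(a)) ∖ W}`. Double counting, these sets have total size
`∑_b d_F(b) d_E(b) ≥ ∑_b d_F(b)²`, and Cauchy–Schwarz bounds this below by `|F|² / |B|`.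
-/

namespace Finset

variable {α β : Type*} [Fintype α] [DecidableEq α] [DecidableEq β]

theorem sum_card_filter_snd_adj [Fintype β] (E F : Finset (α × β)) :
    ∑ a : α, #{e ∈ F | (a, e.2) ∈ E} =
      ∑ b : β, #{e ∈ F | e.2 = b} * #{a | (a, b) ∈ E} := by
  calc ∑ a : α, #{e ∈ F | (a, e.2) ∈ E} = ∑ e ∈ F, #{a | (a, e.2) ∈ E} := by
        simp only [card_filter]
        exact sum_comm
    _ = ∑ b : β, #{e ∈ F | e.2 = b} * #{a | (a, b) ∈ E} := by
        rw [← sum_fiberwise' F Prod.snd fun b => #{a | (a, b) ∈ E}]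
        simp only [sum_const, smul_eq_mul]

theorem card_filter_snd_eq_le {E F : Finset (α × β)} (hFE : F ⊆ E) (b : β) :
    #{e ∈ F | e.2 = b} ≤ #{a | (a, b) ∈ E} := by
  refine card_le_card_of_injOn Prod.fst (fun e he => ?_) ?_
  · obtain ⟨heF, rfl⟩ := mem_filter.1 he
    simpa using hFE heF
  · intro e he e' he' h
    exact Prod.ext h ((mem_filter.1 he).2.trans (mem_filter.1 he').2.symm)

theorem sq_card_le_card_mul_sum_card_filter_snd_adj [Fintype β] {E F : Finset (α × β)}
    (hFE : F ⊆ E) :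
    #F ^ 2 ≤ Fintype.card β * ∑ a : α, #{e ∈ F | (a, e.2) ∈ E} := by
  calc #F ^ 2 = (∑ b : β, #{e ∈ F | e.2 = b}) ^ 2 := by
        rw [card_eq_sum_card_fiberwise fun e _ => mem_univ e.2]
    _ ≤ Fintype.card β * ∑ b : β, #{e ∈ F | e.2 = b} ^ 2 := sq_sum_le_card_mul_sum_sq
    _ ≤ Fintype.card β * ∑ b : β, #{e ∈ F | e.2 = b} * #{a | (a, b) ∈ E} := by
        gcongr with b
        rw [sq]
        exact Nat.mul_le_mul_left _ (card_filter_snd_eq_le hFE b)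
    _ = Fintype.card β * ∑ a : α, #{e ∈ F | (a, e.2) ∈ E} := by
        rw [sum_card_filter_snd_adj]

end Finset

open Finset in
/-- The vertex set `W ⊆ A ∪ B` is represented by its parts `WA ⊆ A` and `WB ⊆ B`. -/
theorem stmt_4_general {A B : Type} [Fintype A] [Fintype B] [DecidableEq A] [DecidableEq B]
    (E : Finset (A × B))
    (WA : Finset A) (WB : Finset B) :
    ((E.filter fun e => e.1 ∉ WA ∧ e.2 ∉ WB).card : ℝ) ^ 2 / (Fintype.card B) ≤
      ∑ a : A, ((E.filter fun e =>
          ((∃ b : B, (e.1, b) ∈ E ∧ (a, b) ∈ E) ∧ e.1 ∉ WA) ∧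
          ((a, e.2) ∈ E ∧ e.2 ∉ WB)).card : ℝ) := by
  set F := E.filter fun e => e.1 ∉ WA ∧ e.2 ∉ WB
  have hFE : F ⊆ E := filter_subset _ _
  have h_local : ∀ a : A, #{e ∈ F | (a, e.2) ∈ E} ≤ #(E.filter fun e =>
      ((∃ b : B, (e.1, b) ∈ E ∧ (a, b) ∈ E) ∧ e.1 ∉ WA) ∧ ((a, e.2) ∈ E ∧ e.2 ∉ WB)) := by
    intro a
    refine card_le_card fun e he => ?_
    obtain ⟨⟨heE, heA, heB⟩, hae⟩ := mem_filter.1 he |>.imp_left mem_filter.1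
    exact mem_filter.2 ⟨heE, ⟨⟨e.2, heE, hae⟩, heA⟩, hae, heB⟩
  refine div_le_of_le_mul₀ (by positivity) (by positivity) ?_
  rw [mul_comm]
  exact_mod_cast (sq_card_le_card_mul_sum_card_filter_snd_adj hFE).trans
    (Nat.mul_le_mul_left _ (sum_le_sum fun a _ => h_local a))

/-- `Σ_{a ∈ A} |E_{(N(a) ∪ N₂(a)) ∖ W}| ≥ |E_{(A ∪ B) ∖ W}|² / |B|`.
The vertex set `W ⊆ A ∪ B` is represented by its parts `WA ⊆ A` and `WB ⊆ B`. -/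
theorem stmt_4 {A B : Type} [Fintype A] [Fintype B] [DecidableEq A] [DecidableEq B]
    (E : Finset (A × B)) (hB : Nonempty B)
    (WA : Finset A) (WB : Finset B) :
    ((E.filter fun e => e.1 ∉ WA ∧ e.2 ∉ WB).card : ℝ) ^ 2 / (Fintype.card B) ≤
      ∑ a : A, ((E.filter fun e =>
          ((∃ b : B, (e.1, b) ∈ E ∧ (a, b) ∈ E) ∧ e.1 ∉ WA) ∧
          ((a, e.2) ∈ E ∧ e.2 ∉ WB)).card : ℝ) :=
  stmt_4_general E WA WB
end

section
/- Let G = (A, B, E) be a finite bipartite graph with E ⊆ A × B, where A and B are nonempty, and let W ⊆ A ∪ B. If |E_{(N(a) ∪ N₂(a)) ∖ W}| < |E|²/(4|A||B|) for every a ∈ A, then |E_{(A ∪ B) ∖ W}| ≤ |E|/2. -/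
/-!
Let `F` be the set of edges avoiding `W` and `d_F(b)` the `F`-degree of `b ∈ B`. For an edge
`e = (a', b) ∈ F` and `a ∈ N(b)` we automatically have `a' ∈ N₂(a)`, so the hypothesis bounds
`#{e ∈ F | (a, e.2) ∈ E}`. Summing over `a` counts each `e ∈ F` once per `E`-neighbour of
`e.2`, hence at least `Σ_b d_F(b)²` times, and by Cauchy–Schwarz `|F|² ≤ |B| Σ_b d_F(b)²`.
Together, `|F|² ≤ |A| |B| · |E|² / (4 |A| |B|) ≤ |E|² / 4`.
-/

open Finset

namespace Bipartite

variable {A B : Type} [DecidableEq A] [DecidableEq B]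

lemma sum_card_filter_eq_sum_card_neighbors [Fintype A] (E F : Finset (A × B)) :
    ∑ a, #{e ∈ F | (a, e.2) ∈ E} = ∑ e ∈ F, #{a | (a, e.2) ∈ E} := by
  simp_rw [card_filter]
  exact sum_comm

lemma sum_sq_card_fiber_le_sum_card_filter [Fintype A] [Fintype B] {E F : Finset (A × B)} (hFE : F ⊆ E) :
    ∑ b, #{e ∈ F | e.2 = b} ^ 2 ≤ ∑ a, #{e ∈ F | (a, e.2) ∈ E} := by
  have fiber_le_neighbors (b : B) : #{e ∈ F | e.2 = b} ≤ #{a | (a, b) ∈ E} :=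
    card_le_card_of_injOn Prod.fst
      (fun e he => by
        obtain ⟨heF, rfl⟩ := mem_filter.mp he
        simpa using hFE heF)
      (fun e₁ he₁ e₂ he₂ h => Prod.ext h <| (mem_filter.mp he₁).2.trans (mem_filter.mp he₂).2.symm)
  calc ∑ b, #{e ∈ F | e.2 = b} ^ 2
      = ∑ e ∈ F, #{e' ∈ F | e'.2 = e.2} := by
        rw [← sum_fiberwise_of_maps_to (g := Prod.snd) (t := univ) (fun e _ => mem_univ e.2)]
        refine sum_congr rfl fun b _ => ?_
        rw [sum_congr rfl fun e he => by rw [(mem_filter.mp he).2], sum_const, smul_eq_mul, sq]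
    _ ≤ ∑ e ∈ F, #{a | (a, e.2) ∈ E} := sum_le_sum fun e _ => fiber_le_neighbors e.2
    _ = ∑ a, #{e ∈ F | (a, e.2) ∈ E} := (sum_card_filter_eq_sum_card_neighbors E F).symm

lemma card_sq_le_card_mul_sum_card_filter [Fintype A] [Fintype B] {E F : Finset (A × B)} (hFE : F ⊆ E) :
    #F ^ 2 ≤ Fintype.card B * ∑ a, #{e ∈ F | (a, e.2) ∈ E} :=
  calc #F ^ 2 = (∑ b, #{e ∈ F | e.2 = b}) ^ 2 := by
        rw [card_eq_sum_card_fiberwise fun e _ => mem_univ e.2]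
    _ ≤ Fintype.card B * ∑ b, #{e ∈ F | e.2 = b} ^ 2 := sq_sum_le_card_mul_sum_sq
    _ ≤ Fintype.card B * ∑ a, #{e ∈ F | (a, e.2) ∈ E} :=
        Nat.mul_le_mul_left _ (sum_sq_card_fiber_le_sum_card_filter hFE)

lemma filter_twoStep_eq [Fintype B] (E : Finset (A × B)) (WA : Finset A) (WB : Finset B) (a : A) :
    {e ∈ E | ((∃ b : B, (e.1, b) ∈ E ∧ (a, b) ∈ E) ∧ e.1 ∉ WA) ∧ ((a, e.2) ∈ E ∧ e.2 ∉ WB)} =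
      {e ∈ {e ∈ E | e.1 ∉ WA ∧ e.2 ∉ WB} | (a, e.2) ∈ E} := by
  rw [filter_filter]
  refine filter_congr fun e he => ⟨?_, ?_⟩
  · rintro ⟨⟨-, hA⟩, haE, hB⟩
    exact ⟨⟨hA, hB⟩, haE⟩
  · rintro ⟨⟨hA, hB⟩, haE⟩
    exact ⟨⟨⟨e.2, he, haE⟩, hA⟩, haE, hB⟩

end Bipartite

open Bipartite in
theorem stmt_5_general {A B : Type} [Fintype A] [Fintype B] [DecidableEq A] [DecidableEq B]
    (E : Finset (A × B))
    (WA : Finset A) (WB : Finset B)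
    (h : ∀ a : A, ((E.filter fun e =>
          ((∃ b : B, (e.1, b) ∈ E ∧ (a, b) ∈ E) ∧ e.1 ∉ WA) ∧
          ((a, e.2) ∈ E ∧ e.2 ∉ WB)).card : ℝ) <
        (E.card : ℝ) ^ 2 / (4 * Fintype.card A * Fintype.card B)) :
    ((E.filter fun e => e.1 ∉ WA ∧ e.2 ∉ WB).card : ℝ) ≤ (E.card : ℝ) / 2 := by
  set F := E.filter fun e => e.1 ∉ WA ∧ e.2 ∉ WB
  set bound := (#E : ℝ) ^ 2 / (4 * Fintype.card A * Fintype.card B)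
  have hsum : (∑ a, #{e ∈ F | (a, e.2) ∈ E} : ℝ) ≤ Fintype.card A * bound := by
    calc (∑ a, #{e ∈ F | (a, e.2) ∈ E} : ℝ) ≤ ∑ _a : A, bound :=
          sum_le_sum fun a _ => (filter_twoStep_eq E WA WB a ▸ h a).le
      _ = Fintype.card A * bound := by rw [sum_const, card_univ, nsmul_eq_mul]
  have hbound : (Fintype.card B : ℝ) * (Fintype.card A * bound) ≤ (#E / 2 : ℝ) ^ 2 :=
    calc (Fintype.card B : ℝ) * (Fintype.card A * bound)
        = (#E / 2 : ℝ) ^ 2 * ((4 * Fintype.card A * Fintype.card B) /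
            (4 * Fintype.card A * Fintype.card B)) := by ring
      _ ≤ (#E / 2 : ℝ) ^ 2 := mul_le_of_le_one_right (by positivity) (div_self_le_one _)
  have hsq : (#F : ℝ) ^ 2 ≤ (#E / 2 : ℝ) ^ 2 :=
    calc (#F : ℝ) ^ 2 ≤ Fintype.card B * ∑ a, (#{e ∈ F | (a, e.2) ∈ E} : ℝ) := by
          exact_mod_cast card_sq_le_card_mul_sum_card_filter (filter_subset _ E)
      _ ≤ Fintype.card B * (Fintype.card A * bound) := by gcongr
      _ ≤ (#E / 2 : ℝ) ^ 2 := hbound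
  exact (pow_le_pow_iff_left₀ (by positivity) (by positivity) two_ne_zero).mp hsq

/-- if `|E_{(N(a) ∪ N₂(a)) ∖ W}| < |E|²/(4|A||B|)` for every `a ∈ A`,
then `|E_{(A ∪ B) ∖ W}| ≤ |E|/2`. -/
theorem stmt_5 {A B : Type} [Fintype A] [Fintype B] [DecidableEq A] [DecidableEq B]
    (E : Finset (A × B)) (hA : Nonempty A) (hB : Nonempty B)
    (WA : Finset A) (WB : Finset B)
    (h : ∀ a : A, ((E.filter fun e =>
          ((∃ b : B, (e.1, b) ∈ E ∧ (a, b) ∈ E) ∧ e.1 ∉ WA) ∧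
          ((a, e.2) ∈ E ∧ e.2 ∉ WB)).card : ℝ) <
        (E.card : ℝ) ^ 2 / (4 * Fintype.card A * Fintype.card B)) :
    ((E.filter fun e => e.1 ∉ WA ∧ e.2 ∉ WB).card : ℝ) ≤ (E.card : ℝ) / 2 :=
  stmt_5_general E WA WB h
end

section
/- Let G = (A, B, E) be a finite bipartite graph with E ⊆ A × B nonempty, and let h_max = max_{a ∈ A} |E(N₂(a))|, where E(S) is the set of edges with at least one endpoint in S. Then there exist an integer m ≥ 0, vertices a₁, …, a_m ∈ A, and pairwise disjoint vertex sets P₁, …, P_m ⊆ A ∪ B with P_i ⊆ N(a_i) ∪ N₂(a_i) for each i, such that Σ_{i=1}^m |E_{P_i}| ≥ |E|³/(8|A||B|·h_max). -/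
/-!
Greedy packing. In the current edge set `F`, pick the vertex `a` maximising the number of
edges ending in `N(a)`; by Cauchy–Schwarz on the degrees in `B` this number is at least
`|F|² / (|A||B|)`, and all these edges lie inside the piece `(N₂(a), N(a))`. Then delete every
edge meeting the piece: at most `h_max` edges disappear, since an edge ending in `N(a)` starts
in `N₂(a)`. Repeating while more than `|E|/2` edges remain gives at least `|E| / (2 h_max)`
rounds, each capturing at least `|E|² / (4|A||B|)` edges.
-/

open Finset Function

namespace BipartiteEdges

variable {A B : Type*} [DecidableEq A] [DecidableEq B]

def nbhd [Fintype B] (F : Finset (A × B)) (a : A) : Finset B := univ.filter fun b => (a, b) ∈ F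

def nbhd₂ [Fintype A] [Fintype B] (F : Finset (A × B)) (a : A) : Finset A :=
  univ.filter fun x => ∃ b, (x, b) ∈ F ∧ (a, b) ∈ F

def edgesIn (F : Finset (A × B)) (P : Finset A) (Q : Finset B) : Finset (A × B) :=
  F.filter fun e => e.1 ∈ P ∧ e.2 ∈ Q

def IsLocalPacking [Fintype A] [Fintype B] (F : Finset (A × B)) {m : ℕ} (a : Fin m → A)
    (P : Fin m → Finset A) (Q : Fin m → Finset B) : Prop :=
  Pairwise (Disjoint on P) ∧ Pairwise (Disjoint on Q) ∧
    ∀ i, P i ⊆ nbhd₂ F (a i) ∧ Q i ⊆ nbhd F (a i)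

def deleteNbhd [Fintype A] [Fintype B] (F : Finset (A × B)) (a : A) : Finset (A × B) :=
  F.filter fun e => e.1 ∉ nbhd₂ F a ∧ e.2 ∉ nbhd F a

section Fintype

variable [Fintype B] {F G : Finset (A × B)}

theorem nbhd_mono (h : F ⊆ G) (a : A) : nbhd F a ⊆ nbhd G a := by
  intro b
  simp only [nbhd, mem_filter, mem_univ, true_and]
  exact fun hab => h hab

theorem disjoint_nbhd {Q : Finset B} (hQ : ∀ e ∈ F, e.2 ∉ Q) (a : A) :
    Disjoint Q (nbhd F a) :=
  disjoint_left.2 fun b hbQ hb => hQ (a, b) (mem_filter.1 hb).2 hbQ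

variable [Fintype A]

theorem nbhd₂_mono (h : F ⊆ G) (a : A) : nbhd₂ F a ⊆ nbhd₂ G a := by
  intro x
  simp only [nbhd₂, mem_filter, mem_univ, true_and]
  exact fun ⟨b, hxb, hab⟩ => ⟨b, h hxb, h hab⟩

theorem disjoint_nbhd₂ {P : Finset A} (hP : ∀ e ∈ F, e.1 ∉ P) (a : A) :
    Disjoint P (nbhd₂ F a) := by
  refine disjoint_left.2 fun x hxP hx => ?_
  obtain ⟨b, hxb, -⟩ := (mem_filter.1 hx).2
  exact hP _ hxb hxP

theorem fst_mem_nbhd₂ {a : A} {e : A × B} (he : e ∈ F) (h : e.2 ∈ nbhd F a) :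
    e.1 ∈ nbhd₂ F a :=
  mem_filter.2 ⟨mem_univ _, e.2, he, (mem_filter.1 h).2⟩

theorem edgesIn_nbhd₂_nbhd (a : A) :
    edgesIn F (nbhd₂ F a) (nbhd F a) = F.filter (·.2 ∈ nbhd F a) := by
  ext e
  simp only [edgesIn, mem_filter]
  exact ⟨fun ⟨he, _, hb⟩ => ⟨he, hb⟩,
    fun ⟨he, hb⟩ => ⟨he, fst_mem_nbhd₂ he hb, hb⟩⟩

theorem card_filter_fst_mem_nbhd₂_mono (h : F ⊆ G) (a : A) :
    #(F.filter (·.1 ∈ nbhd₂ F a)) ≤ #(G.filter (·.1 ∈ nbhd₂ G a)) :=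
  card_le_card fun e he => by
    simp only [mem_filter] at he ⊢
    exact ⟨h he.1, nbhd₂_mono h a he.2⟩

theorem deleteNbhd_ssubset {a : A} (h : (edgesIn F (nbhd₂ F a) (nbhd F a)).Nonempty) :
    deleteNbhd F a ⊂ F := by
  obtain ⟨e, he⟩ := h
  simp only [edgesIn, mem_filter] at he
  exact filter_ssubset.2 ⟨e, he.1, fun h => h.1 he.2.1⟩

theorem card_le_card_deleteNbhd_add (a : A) :
    #F ≤ #(deleteNbhd F a) + #(F.filter (·.1 ∈ nbhd₂ F a)) := by
  rw [deleteNbhd,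
    ← card_filter_add_card_filter_not (fun e : A × B => e.1 ∉ nbhd₂ F a ∧ e.2 ∉ nbhd F a)]
  refine Nat.add_le_add_left (card_le_card fun e he => ?_) _
  simp only [mem_filter, not_and_or, not_not] at he ⊢
  exact ⟨he.1, he.2.elim id (fst_mem_nbhd₂ he.1)⟩

end Fintype

section Counting

variable [Fintype A] (F : Finset (A × B))

theorem card_filter_snd_eq (b : B) :
    #(F.filter (·.2 = b)) = #(univ.filter fun a => (a, b) ∈ F) := by
  have : F.filter (·.2 = b) = (univ.filter fun a => (a, b) ∈ F) ×ˢ {b} := by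
    ext ⟨x, y⟩
    simp only [mem_filter, mem_product, mem_univ, true_and, mem_singleton]
    exact ⟨fun ⟨h, hy⟩ => ⟨hy ▸ h, hy⟩, fun ⟨h, hy⟩ => ⟨hy ▸ h, hy⟩⟩
  rw [this, card_product, card_singleton, mul_one]

variable [Fintype B]

theorem sum_card_filter_snd_mem_nbhd :
    ∑ a, #(F.filter (·.2 ∈ nbhd F a)) = ∑ b, #(F.filter (·.2 = b)) ^ 2 := by
  calc ∑ a, #(F.filter (·.2 ∈ nbhd F a))
      = ∑ e ∈ F, #(univ.filter fun a => (a, e.2) ∈ F) := by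
        simp only [card_filter, nbhd, mem_filter, mem_univ, true_and]
        exact sum_comm
    _ = ∑ e ∈ F, #(F.filter (·.2 = e.2)) := by simp only [card_filter_snd_eq]
    _ = ∑ b, #(F.filter (·.2 = b)) ^ 2 := by
        rw [← sum_fiberwise' F Prod.snd fun b => #(F.filter (·.2 = b))]
        simp only [sum_const, smul_eq_mul, sq]

theorem exists_sq_card_le_card_mul_card_filter_snd_mem_nbhd [Nonempty A] :
    ∃ a, #F ^ 2 ≤ Fintype.card A * Fintype.card B * #(F.filter (·.2 ∈ nbhd F a)) := by
  have hCS : #F ^ 2 ≤ Fintype.card B * ∑ b, #(F.filter (·.2 = b)) ^ 2 := by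
    rw [card_eq_sum_card_fiberwise fun e _ => mem_univ e.2]
    exact sq_sum_le_card_mul_sum_sq
  obtain ⟨a, -, ha⟩ := exists_le_of_sum_le univ_nonempty (f := fun _ : A => #F ^ 2)
    (g := fun a => Fintype.card A * Fintype.card B * #(F.filter (·.2 ∈ nbhd F a))) (by
      rw [sum_const, card_univ, smul_eq_mul, ← mul_sum, sum_card_filter_snd_mem_nbhd, mul_assoc]
      exact Nat.mul_le_mul_left _ hCS)
  exact ⟨a, ha⟩

end Counting

section Packing

variable [Fintype A] [Fintype B] {F G : Finset (A × B)} {m : ℕ} {a : Fin m → A}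
  {P : Fin m → Finset A} {Q : Fin m → Finset B}

theorem isLocalPacking_zero (a : Fin 0 → A) (P : Fin 0 → Finset A) (Q : Fin 0 → Finset B) :
    IsLocalPacking F a P Q :=
  ⟨fun i => i.elim0, fun i => i.elim0, fun i => i.elim0⟩

theorem IsLocalPacking.mono (hP : IsLocalPacking F a P Q) (h : F ⊆ G) :
    IsLocalPacking G a P Q :=
  ⟨hP.1, hP.2.1, fun i =>
    ⟨(hP.2.2 i).1.trans (nbhd₂_mono h _), (hP.2.2 i).2.trans (nbhd_mono h _)⟩⟩

theorem _root_.Pairwise.fin_cons {α : Type*} [PartialOrder α] [OrderBot α] {f : Fin m → α}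
    (hf : Pairwise (Disjoint on f)) {x : α} (hx : ∀ i, Disjoint x (f i)) :
    Pairwise (Disjoint on (Fin.cons x f : Fin (m + 1) → α)) := by
  intro i j hij
  induction i using Fin.cases <;> induction j using Fin.cases
  · exact absurd rfl hij
  · exact hx _
  · exact (hx _).symm
  · exact hf (ne_of_apply_ne Fin.succ hij)

theorem IsLocalPacking.cons (hP : IsLocalPacking F a P Q) {x : A} {P₀ : Finset A}
    {Q₀ : Finset B} (hP₀ : P₀ ⊆ nbhd₂ F x) (hQ₀ : Q₀ ⊆ nbhd F x)
    (hPd : ∀ i, Disjoint P₀ (P i)) (hQd : ∀ i, Disjoint Q₀ (Q i)) :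
    IsLocalPacking F (Fin.cons x a) (Fin.cons P₀ P) (Fin.cons Q₀ Q) := by
  refine ⟨hP.1.fin_cons hPd, hP.2.1.fin_cons hQd, fun i => ?_⟩
  induction i using Fin.cases
  · exact ⟨hP₀, hQ₀⟩
  · exact hP.2.2 _

theorem IsLocalPacking.cons_nbhd {x : A} (hP : IsLocalPacking (deleteNbhd F x) a P Q) :
    IsLocalPacking F (Fin.cons x a) (Fin.cons (nbhd₂ F x) P) (Fin.cons (nbhd F x) Q) :=
  (hP.mono (filter_subset _ _)).cons subset_rfl subset_rfl
    (fun i => (disjoint_nbhd₂ (fun _ he => (mem_filter.1 he).2.1) _).mono_right (hP.2.2 i).1)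
    (fun i => (disjoint_nbhd (fun _ he => (mem_filter.1 he).2.2) _).mono_right (hP.2.2 i).2)

end Packing

theorem exists_isLocalPacking_sub_mul_sq_le [Fintype A] [Fintype B] (h : ℕ) {t : ℝ}
    (ht : 0 ≤ t) (F : Finset (A × B)) (hF : ∀ a, #(F.filter (·.1 ∈ nbhd₂ F a)) ≤ h) :
    ∃ (m : ℕ) (a : Fin m → A) (P : Fin m → Finset A) (Q : Fin m → Finset B),
      IsLocalPacking F a P Q ∧
        (#F - t) * t ^ 2 ≤
          Fintype.card A * Fintype.card B * h * ∑ i, (#(edgesIn F (P i) (Q i)) : ℝ) := by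
  induction F using Finset.strongInduction with
  | H F ih =>
  by_cases hFt : #F ≤ t
  · refine ⟨0, Fin.elim0, Fin.elim0, Fin.elim0, isLocalPacking_zero _ _ _, ?_⟩
    simp only [univ_eq_empty, sum_empty, mul_zero]
    exact mul_nonpos_of_nonpos_of_nonneg (sub_nonpos.2 hFt) (sq_nonneg t)
  rw [not_le] at hFt
  have hFpos : 0 < #F := by exact_mod_cast ht.trans_lt hFt
  obtain ⟨e₀, -⟩ := card_pos.1 hFpos
  have : Nonempty A := ⟨e₀.1⟩
  obtain ⟨x, hx⟩ := exists_sq_card_le_card_mul_card_filter_snd_mem_nbhd F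
  rw [← edgesIn_nbhd₂_nbhd] at hx
  set F' := deleteNbhd F x
  have hF'F : F' ⊂ F := deleteNbhd_ssubset <|
    card_pos.1 (Nat.pos_of_mul_pos_left (hx.trans_lt' (by positivity)))
  obtain ⟨m, a, P, Q, hPQ, hsum⟩ := ih F' hF'F fun y =>
    (card_filter_fst_mem_nbhd₂_mono hF'F.subset y).trans (hF y)
  refine ⟨m + 1, Fin.cons x a, Fin.cons (nbhd₂ F x) P, Fin.cons (nbhd F x) Q,
    hPQ.cons_nbhd, ?_⟩
  rw [Fin.sum_univ_succ]
  simp only [Fin.cons_zero, Fin.cons_succ]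
  have hdeleted : (#F : ℝ) ≤ #F' + h := by
    exact_mod_cast (card_le_card_deleteNbhd_add x).trans (Nat.add_le_add_left (hF x) _)
  have hcaptured :
      t ^ 2 ≤ Fintype.card A * Fintype.card B * #(edgesIn F (nbhd₂ F x) (nbhd F x)) := by
    calc t ^ 2 ≤ (#F : ℝ) ^ 2 := pow_le_pow_left₀ ht hFt.le 2
      _ ≤ _ := by exact_mod_cast hx
  have hmono :
      ∑ i, (#(edgesIn F' (P i) (Q i)) : ℝ) ≤ ∑ i, (#(edgesIn F (P i) (Q i)) : ℝ) :=
    sum_le_sum fun i _ => by exact_mod_cast card_le_card (filter_subset_filter _ hF'F.subset)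
  have hAB : (0 : ℝ) ≤ Fintype.card A * Fintype.card B * h := by positivity
  calc (#F - t) * t ^ 2 ≤ (#F' - t) * t ^ 2 + h * t ^ 2 := by
        linarith [mul_le_mul_of_nonneg_right hdeleted (sq_nonneg t)]
    _ ≤ _ := by
        linarith [mul_le_mul_of_nonneg_left hmono hAB,
          mul_le_mul_of_nonneg_left hcaptured (Nat.cast_nonneg (α := ℝ) h)]

end BipartiteEdges

open BipartiteEdges

theorem stmt_6_general {A B : Type} [Fintype A] [Fintype B] [DecidableEq A] [DecidableEq B]
    (E : Finset (A × B))
    (hmax : ℕ)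
    (hhmax : hmax = Finset.univ.sup fun a : A =>
      (E.filter fun e => ∃ b : B, (e.1, b) ∈ E ∧ (a, b) ∈ E).card) :
    ∃ (m : ℕ) (av : Fin m → A) (PA : Fin m → Finset A) (PB : Fin m → Finset B),
      (∀ i j, i ≠ j → Disjoint (PA i) (PA j) ∧ Disjoint (PB i) (PB j)) ∧
      (∀ i, (∀ a ∈ PA i, ∃ b : B, (a, b) ∈ E ∧ (av i, b) ∈ E) ∧
        (∀ b ∈ PB i, (av i, b) ∈ E)) ∧
      (E.card : ℝ) ^ 3 / (8 * Fintype.card A * Fintype.card B * hmax) ≤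
        ∑ i, ((E.filter fun e => e.1 ∈ PA i ∧ e.2 ∈ PB i).card : ℝ) := by
  have hE₂ : ∀ a, #(E.filter (·.1 ∈ nbhd₂ E a)) ≤ hmax := fun a => by
    simpa only [hhmax, nbhd₂, mem_filter, mem_univ, true_and] using
      le_sup (f := fun a : A => #(E.filter fun e => ∃ b : B, (e.1, b) ∈ E ∧ (a, b) ∈ E))
        (mem_univ a)
  obtain ⟨m, av, PA, PB, ⟨hPA, hPB, hsub⟩, hsum⟩ :=
    exists_isLocalPacking_sub_mul_sq_le hmax (t := #E / 2) (by positivity) E hE₂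
  refine ⟨m, av, PA, PB, fun i j hij => ⟨hPA hij, hPB hij⟩,
    fun i => ⟨fun x hx => ?_, fun b hb => ?_⟩,
    div_le_of_le_mul₀ (by positivity) (by positivity) ?_⟩
  · simpa [nbhd₂] using (hsub i).1 hx
  · simpa [nbhd] using (hsub i).2 hb
  · unfold edgesIn at hsum
    linarith

/-- divide-and-conquer — one can find disjoint pieces `P_i ⊆ N(a_i) ∪ N₂(a_i)`
whose internal edges total at least `|E|³/(8|A||B|·h_max)`. -/
theorem stmt_6 {A B : Type} [Fintype A] [Fintype B] [DecidableEq A] [DecidableEq B]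
    (E : Finset (A × B)) (hE : E.Nonempty)
    (hmax : ℕ)
    (hhmax : hmax = Finset.univ.sup fun a : A =>
      (E.filter fun e => ∃ b : B, (e.1, b) ∈ E ∧ (a, b) ∈ E).card) :
    ∃ (m : ℕ) (av : Fin m → A) (PA : Fin m → Finset A) (PB : Fin m → Finset B),
      (∀ i j, i ≠ j → Disjoint (PA i) (PA j) ∧ Disjoint (PB i) (PB j)) ∧
      (∀ i, (∀ a ∈ PA i, ∃ b : B, (a, b) ∈ E ∧ (av i, b) ∈ E) ∧
        (∀ b ∈ PB i, (av i, b) ∈ E)) ∧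
      (E.card : ℝ) ^ 3 / (8 * Fintype.card A * Fintype.card B * hmax) ≤
        ∑ i, ((E.filter fun e => e.1 ∈ PA i ∧ e.2 ∈ PB i).card : ℝ) :=
  stmt_6_general E hmax hhmax
end

section
/- Let (A, B, E, Σ_A, Σ_B, {π_e}) be a μ-smooth projection game and suppose B* ⊆ B satisfies |N(a) ∩ B*| > μ·d_a for every a ∈ A. If (φ_A, φ_B) and (φ_A', φ_B') are two assignments each of which satisfies every edge of E, and φ_B(b) = φ_B'(b) for all b ∈ B*, then φ_A(a) = φ_A'(a) for all a ∈ A. -/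
/-! If `φA a ≠ φA' a`, every `b ∈ N(a) ∩ B*` is a collision of the two labels of `a`, since
`π (a, b) (φA a) = φB b = φB' b = π (a, b) (φA' a)`; smoothness bounds the collisions by `μ·d_a`,
contradicting `|N(a) ∩ B*| > μ·d_a`. -/

theorem neighbors_inter_subset_collisions {A B LA LB : Type} [Fintype B]
    [DecidableEq A] [DecidableEq B] [DecidableEq LB]
    {E : Finset (A × B)} {π : A × B → LA → LB} {φA φA' : A → LA} {φB φB' : B → LB}
    (h1 : ∀ e ∈ E, π e (φA e.1) = φB e.2) (h2 : ∀ e ∈ E, π e (φA' e.1) = φB' e.2)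
    {Bstar : Finset B} (hagree : ∀ b ∈ Bstar, φB b = φB' b) (a : A) :
    (Finset.univ.filter fun b : B => (a, b) ∈ E) ∩ Bstar ⊆
      Finset.univ.filter fun b : B => (a, b) ∈ E ∧ π (a, b) (φA a) = π (a, b) (φA' a) := by
  intro b hb
  simp only [Finset.mem_inter, Finset.mem_filter, Finset.mem_univ, true_and] at hb ⊢
  obtain ⟨hE, hb⟩ := hb
  exact ⟨hE, by rw [h1 (a, b) hE, h2 (a, b) hE, hagree b hb]⟩

theorem stmt_8_general {A B LA LB : Type} [Fintype B]
    [DecidableEq A] [DecidableEq B] [DecidableEq LB]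
    (E : Finset (A × B)) (π : A × B → LA → LB)
    (μ : ℝ)
    (hsmooth : ∀ (a : A) (σ σ' : LA), σ ≠ σ' →
      ((Finset.univ.filter fun b : B =>
          (a, b) ∈ E ∧ π (a, b) σ = π (a, b) σ').card : ℝ) ≤
        μ * ((Finset.univ.filter fun b : B => (a, b) ∈ E).card : ℝ))
    (Bstar : Finset B)
    (hBstar : ∀ a : A,
      μ * ((Finset.univ.filter fun b : B => (a, b) ∈ E).card : ℝ) <
        (((Finset.univ.filter fun b : B => (a, b) ∈ E) ∩ Bstar).card : ℝ))
    (φA φA' : A → LA) (φB φB' : B → LB)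
    (h1 : ∀ e ∈ E, π e (φA e.1) = φB e.2)
    (h2 : ∀ e ∈ E, π e (φA' e.1) = φB' e.2)
    (hagree : ∀ b ∈ Bstar, φB b = φB' b) :
    ∀ a : A, φA a = φA' a := by
  intro a
  by_contra hne
  have hcard : ((((Finset.univ.filter fun b : B => (a, b) ∈ E)) ∩ Bstar).card : ℝ) ≤
      ((Finset.univ.filter fun b : B =>
        (a, b) ∈ E ∧ π (a, b) (φA a) = π (a, b) (φA' a)).card : ℝ) := by
    exact_mod_cast Finset.card_le_card (neighbors_inter_subset_collisions h1 h2 hagree a)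
  linarith [hsmooth a (φA a) (φA' a) hne, hBstar a]

/-- in a μ-smooth projection game, if `B* ⊆ B` meets every neighborhood
`N(a)` in more than `μ·d_a` vertices, then any two fully satisfying assignments that
agree on `B*` agree on all of `A`. -/
theorem stmt_8 {A B LA LB : Type} [Fintype A] [Fintype B] [Fintype LA] [Fintype LB]
    [DecidableEq A] [DecidableEq B] [DecidableEq LA] [DecidableEq LB]
    (E : Finset (A × B)) (π : A × B → LA → LB)
    (μ : ℝ) (hμ0 : 0 ≤ μ) (hμ1 : μ ≤ 1)
    (hsmooth : ∀ (a : A) (σ σ' : LA), σ ≠ σ' →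
      ((Finset.univ.filter fun b : B =>
          (a, b) ∈ E ∧ π (a, b) σ = π (a, b) σ').card : ℝ) ≤
        μ * ((Finset.univ.filter fun b : B => (a, b) ∈ E).card : ℝ))
    (Bstar : Finset B)
    (hBstar : ∀ a : A,
      μ * ((Finset.univ.filter fun b : B => (a, b) ∈ E).card : ℝ) <
        (((Finset.univ.filter fun b : B => (a, b) ∈ E) ∩ Bstar).card : ℝ))
    (φA φA' : A → LA) (φB φB' : B → LB)
    (h1 : ∀ e ∈ E, π e (φA e.1) = φB e.2)
    (h2 : ∀ e ∈ E, π e (φA' e.1) = φB' e.2)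
    (hagree : ∀ b ∈ Bstar, φB b = φB' b) :
    ∀ a : A, φA a = φA' a :=
  stmt_8_general E π μ hsmooth Bstar hBstar φA φA' φB φB' h1 h2 hagree
end

section
/- There exist absolute constants C ≥ 1 and C' ≥ 1 such that the following holds. Let G = (A, B, E) be a finite bipartite graph with E ⊆ A × B and |A| ≥ 2, and let μ ∈ (0,1). If every a ∈ A has degree d_a ≥ C·log(|A|)/μ, then there exists a subset B* ⊆ B with |B*| ≤ C'·μ·|B| such that |N(a) ∩ B*| > μ·d_a for every a ∈ A. -/
/-!
Pick `B*` at random, each vertex of `B` independently with probability `2μ`. Exponential-moment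
(Chernoff) bounds show that `|B*| > 4μ|B|` has probability at most `exp(-μ|B|/2) ≤ |A|⁻⁴`, and
that `|N(a) ∩ B*| ≤ μ d_a` has probability at most `exp(-μ d_a/4) ≤ |A|⁻²` for each `a`. A union
bound over these `|A| + 1` events leaves positive probability for a good `B*`. When `μ > 1/2`,
`B* = B` already works.
-/

open Finset Real

section BernoulliSubset

variable {B : Type*} [Fintype B] [DecidableEq B]

/-- The probability that a random subset of `B`, containing each element independently with
probability `q`, equals `S`. -/
noncomputable def bernoulliSubsetProb (q : ℝ) (S : Finset B) : ℝ := q ^ #S * (1 - q) ^ #Sᶜ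

lemma bernoulliSubsetProb_nonneg {q : ℝ} (hq₀ : 0 ≤ q) (hq₁ : q ≤ 1) (S : Finset B) :
    0 ≤ bernoulliSubsetProb q S := by
  have : 0 ≤ 1 - q := sub_nonneg.2 hq₁
  unfold bernoulliSubsetProb
  positivity

lemma sum_bernoulliSubsetProb_mul_prod (q : ℝ) (h : B → ℝ) :
    ∑ S, bernoulliSubsetProb q S * ∏ b ∈ S, h b = ∏ b, (q * h b + (1 - q)) := by
  rw [prod_add, powerset_univ]
  refine sum_congr rfl fun S _ => ?_
  rw [prod_mul_distrib, prod_const, prod_const, ← compl_eq_univ_sdiff, bernoulliSubsetProb]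
  ring

lemma sum_bernoulliSubsetProb_mul_pow_card_inter (q x : ℝ) (T : Finset B) :
    ∑ S, bernoulliSubsetProb q S * x ^ #(T ∩ S) = (1 + q * (x - 1)) ^ #T := by
  have key := sum_bernoulliSubsetProb_mul_prod q fun b => if b ∈ T then x else 1
  have hfactor : ∀ b, q * (if b ∈ T then x else 1) + (1 - q) =
      if b ∈ T then 1 + q * (x - 1) else 1 := by
    intro b
    split_ifs <;> ring
  simp only [prod_ite_mem, prod_const, hfactor, inter_comm _ T, inter_univ] at key
  exact key

lemma sum_bernoulliSubsetProb (q : ℝ) : ∑ S : Finset B, bernoulliSubsetProb q S = 1 := by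
  simpa using sum_bernoulliSubsetProb_mul_pow_card_inter (B := B) q 1 ∅

/-- Chernoff bound: the upper tail of `#(T ∩ S)` for `θ > 0`, the lower tail for `θ < 0`. -/
lemma sum_bernoulliSubsetProb_filter_le_exp {q : ℝ} (hq₀ : 0 ≤ q) (hq₁ : q ≤ 1)
    (T : Finset B) (θ t : ℝ) (P : Finset B → Prop) [DecidablePred P]
    (hP : ∀ S, P S → θ * t ≤ θ * #(T ∩ S)) :
    ∑ S with P S, bernoulliSubsetProb q S ≤ exp (q * (exp θ - 1) * #T - θ * t) := by
  have hp := bernoulliSubsetProb_nonneg (B := B) hq₀ hq₁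
  calc ∑ S with P S, bernoulliSubsetProb q S
      ≤ ∑ S, bernoulliSubsetProb q S * exp (θ * #(T ∩ S) - θ * t) := by
        rw [sum_filter]
        gcongr with S
        split_ifs with hS
        · exact le_mul_of_one_le_right (hp S) (one_le_exp (by linarith [hP S hS]))
        · exact mul_nonneg (hp S) (exp_nonneg _)
    _ = exp (-(θ * t)) * (1 + q * (exp θ - 1)) ^ #T := by
        rw [← sum_bernoulliSubsetProb_mul_pow_card_inter, mul_sum]
        refine sum_congr rfl fun S _ => ?_
        rw [sub_eq_add_neg, exp_add, ← exp_nat_mul, mul_comm θ]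
        ring
    _ ≤ exp (-(θ * t)) * exp (q * (exp θ - 1)) ^ #T := by
        gcongr
        · nlinarith [exp_pos θ]
        · linarith [add_one_le_exp (q * (exp θ - 1))]
    _ = exp (q * (exp θ - 1) * #T - θ * t) := by
        rw [← exp_nat_mul, ← exp_add]
        ring_nf

end BernoulliSubset

lemma exists_forall_not_of_sum_filter_lt {α ι : Type*} [Fintype α] [Fintype ι] {w : α → ℝ}
    (hw : ∀ x, 0 ≤ w x) (P₀ : α → Prop) [DecidablePred P₀] (P : ι → α → Prop)
    [∀ i, DecidablePred (P i)]
    (h : ∑ x with P₀ x, w x + ∑ i, ∑ x with P i x, w x < ∑ x, w x) :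
    ∃ x, ¬ P₀ x ∧ ∀ i, ¬ P i x := by
  by_contra! hbad
  refine h.not_ge ?_
  simp only [sum_filter]
  rw [sum_comm, ← sum_add_distrib]
  gcongr with x
  by_cases hx : P₀ x
  · rw [if_pos hx]
    exact le_add_of_nonneg_right (sum_nonneg fun i _ => ite_nonneg (hw x) le_rfl)
  · obtain ⟨i, hi⟩ := hbad x hx
    calc w x = if P i x then w x else 0 := (if_pos hi).symm
      _ ≤ ∑ j, if P j x then w x else 0 :=
          single_le_sum (f := fun j => if P j x then w x else 0)
            (fun j _ => ite_nonneg (hw x) le_rfl) (mem_univ i)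
      _ ≤ _ := le_add_of_nonneg_left (ite_nonneg (hw x) le_rfl)

lemma exp_neg_four_mul_log_add_mul_exp_neg_two_mul_log_lt_one {K : ℝ} (hK : 2 ≤ K) :
    exp (-(4 * log K)) + K * exp (-(2 * log K)) < 1 := by
  have hL : log 2 ≤ log K := log_le_log (by norm_num) hK
  have hL₀ : 0 < log K := (log_pos (by norm_num)).trans_le hL
  have hhalf : exp (-log K) ≤ 1 / 2 := by
    rw [exp_neg, exp_log (by linarith), one_div]
    exact inv_anti₀ (by norm_num) hK
  have hK' : K * exp (-(2 * log K)) = exp (-log K) := by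
    rw [← exp_log (show 0 < K by linarith), log_exp, ← exp_add]
    ring_nf
  rw [hK']
  linarith [exp_lt_exp.2 (show -(4 * log K) < -log K by linarith)]

theorem exists_card_le_and_lt_card_inter {A B : Type*} [Fintype A] [Fintype B] [DecidableEq B]
    (N : A → Finset B) {μ : ℝ} (hμ₀ : 0 < μ) (hμ : μ ≤ 1 / 2) (hA : 2 ≤ Fintype.card A)
    (hdeg : ∀ a, 8 * log (Fintype.card A) ≤ μ * #(N a)) :
    ∃ S : Finset B, (#S : ℝ) ≤ 4 * μ * Fintype.card B ∧ ∀ a, μ * #(N a) < #(N a ∩ S) := by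
  set L := log (Fintype.card A)
  have hq₀ : 0 ≤ 2 * μ := by linarith
  have hq₁ : 2 * μ ≤ 1 := by linarith
  have he := exp_one_lt_d9
  have he' := exp_neg_one_lt_d9
  have hsize : ∑ S : Finset B with 4 * μ * Fintype.card B < #S, bernoulliSubsetProb (2 * μ) S
      ≤ exp (-(4 * L)) := by
    obtain ⟨a⟩ : Nonempty A := Fintype.card_pos_iff.1 (by omega)
    have hn : (#(N a) : ℝ) ≤ Fintype.card B := by exact_mod_cast card_le_univ (N a)
    refine (sum_bernoulliSubsetProb_filter_le_exp hq₀ hq₁ univ 1 (4 * μ * Fintype.card B) _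
      fun S hS => by simpa using hS.le).trans (exp_le_exp.2 ?_)
    rw [card_univ]
    have hμn : 0 ≤ μ * Fintype.card B := by positivity
    nlinarith [mul_le_mul_of_nonneg_left he.le hμn, hdeg a]
  have hmiss : ∀ a, ∑ S : Finset B with #(N a ∩ S) ≤ μ * #(N a), bernoulliSubsetProb (2 * μ) S
      ≤ exp (-(2 * L)) := by
    intro a
    refine (sum_bernoulliSubsetProb_filter_le_exp hq₀ hq₁ (N a) (-1) (μ * #(N a)) _
      fun S hS => by linarith).trans (exp_le_exp.2 ?_)
    have hμd : 0 ≤ μ * #(N a) := by positivity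
    nlinarith [mul_le_mul_of_nonneg_left he'.le hμd, hdeg a]
  obtain ⟨S, hS, hSa⟩ := exists_forall_not_of_sum_filter_lt
    (bernoulliSubsetProb_nonneg hq₀ hq₁) _ _ <| calc
      _ ≤ exp (-(4 * L)) + ∑ _a : A, exp (-(2 * L)) :=
          add_le_add hsize (sum_le_sum fun a _ => hmiss a)
      _ < 1 := by
        rw [sum_const, card_univ, nsmul_eq_mul]
        exact exp_neg_four_mul_log_add_mul_exp_neg_two_mul_log_lt_one (by exact_mod_cast hA)
      _ = _ := (sum_bernoulliSubsetProb _).symm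
  exact ⟨S, not_lt.1 hS, fun a => not_le.1 (hSa a)⟩

/-- there are absolute constants `C, C' ≥ 1` such that any bipartite graph
with `|A| ≥ 2` and all degrees in `A` at least `C·log|A|/μ` admits `B* ⊆ B` of size at
most `C'·μ·|B|` hitting every `N(a)` in more than `μ·d_a` vertices. -/
theorem stmt_9 :
    ∃ C C' : ℝ, 1 ≤ C ∧ 1 ≤ C' ∧
      ∀ (A B : Type) [Fintype A] [Fintype B] [DecidableEq A] [DecidableEq B]
        (E : Finset (A × B)) (μ : ℝ),
        2 ≤ Fintype.card A → 0 < μ → μ < 1 →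
        (∀ a : A, C * Real.log (Fintype.card A) / μ ≤
          ((Finset.univ.filter fun b : B => (a, b) ∈ E).card : ℝ)) →
        ∃ Bstar : Finset B,
          (Bstar.card : ℝ) ≤ C' * μ * Fintype.card B ∧
          ∀ a : A,
            μ * ((Finset.univ.filter fun b : B => (a, b) ∈ E).card : ℝ) <
              (((Finset.univ.filter fun b : B => (a, b) ∈ E) ∩ Bstar).card : ℝ) := by
  refine ⟨8, 4, by norm_num, by norm_num, ?_⟩
  intro A B _ _ _ _ E μ hA hμ₀ hμ₁ hdeg
  have hdeg' : ∀ a : A, 8 * log (Fintype.card A) ≤ μ * #{b | (a, b) ∈ E} := fun a => by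
    linarith [(div_le_iff₀ hμ₀).1 (hdeg a)]
  rcases le_or_gt μ (1 / 2) with hμ | hμ
  · exact exists_card_le_and_lt_card_inter _ hμ₀ hμ hA hdeg'
  · have hL : 0 < log (Fintype.card A) := log_pos (by exact_mod_cast hA)
    refine ⟨univ, ?_, fun a => ?_⟩
    · rw [card_univ]
      nlinarith [(Fintype.card B).cast_nonneg (α := ℝ)]
    · rw [inter_univ]
      nlinarith [hdeg' a]
end

section
/- Let G = (A, B, E) be a finite bipartite graph with E ⊆ A × B and let μ be a real number with 0 < μ < 1/4. Suppose that d_a ≥ 1/μ for every a ∈ A and that |A| ≤ |E|/4. Then there exists a subset B* ⊆ B with |B*| ≤ 8·μ·|B| such that Σ_{a ∈ S} d_a ≥ |E|/4, where S = {a ∈ A : |N(a) ∩ B*| > μ·d_a}. -/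
/-!
Take `B*` to be a random subset of `B` containing each vertex independently with probability
`p = 4μ`, so that `|N(a) ∩ B*|` has mean `4μ d_a` and variance `4μ(1 - 4μ) d_a`. By Chebyshev,
using `μ d_a ≥ 1`, a vertex `a` fails to be saturated with probability at most `4(1 - 4μ)/9`; and
since `μ |B| ≥ μ d_a ≥ 1`, the set `B*` exceeds `8μ|B|` with probability at most `(1 - 4μ)/4`.
Hence the expected saturated degree, minus `|E|` on the event that `B*` is too large, is at least
`(1 - 25(1 - 4μ)/36)|E| > |E|/4`, and some outcome does at least as well.
-/

open Finset

lemma Finset.sum_filter_le_sum_mul_div {ι : Type*} (s : Finset ι) {w g : ι → ℝ}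
    (hw : ∀ i ∈ s, 0 ≤ w i) (hg : ∀ i ∈ s, 0 ≤ g i) {c : ℝ} (hc : 0 < c) :
    ∑ i ∈ s with c ≤ g i, w i ≤ (∑ i ∈ s, w i * g i) / c := by
  rw [le_div_iff₀ hc, sum_mul]
  calc ∑ i ∈ s with c ≤ g i, w i * c
      ≤ ∑ i ∈ s with c ≤ g i, w i * g i :=
        sum_le_sum fun i hi =>
          mul_le_mul_of_nonneg_left (mem_filter.1 hi).2 (hw i (mem_filter.1 hi).1)
    _ ≤ ∑ i ∈ s, w i * g i :=
        sum_le_sum_of_subset_of_nonneg (filter_subset _ s) fun i hi _ =>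
          mul_nonneg (hw i hi) (hg i hi)

lemma Finset.card_inter_eq_sum_ite {B : Type*} [DecidableEq B] (N T : Finset B) :
    (#(N ∩ T) : ℝ) = ∑ b ∈ N, if {b} ⊆ T then 1 else 0 := by
  simp

lemma Finset.sq_card_inter_eq_sum_ite {B : Type*} [DecidableEq B] (N T : Finset B) :
    (#(N ∩ T) : ℝ) ^ 2 = ∑ b ∈ N, ∑ c ∈ N, if {b, c} ⊆ T then 1 else 0 := by
  simp_rw [sq, card_inter_eq_sum_ite, sum_mul_sum, insert_subset_iff, singleton_subset_iff,
    ite_and, ite_mul, one_mul, zero_mul]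

section RandomSubset

variable {B : Type*} [Fintype B] [DecidableEq B]

/-- The probability of `T` under the law of a random subset of `B` containing each element
independently with probability `p`. -/
noncomputable def subsetWeight (p : ℝ) (T : Finset B) : ℝ := p ^ #T * (1 - p) ^ #Tᶜ

lemma subsetWeight_nonneg {p : ℝ} (hp0 : 0 ≤ p) (hp1 : p ≤ 1) (T : Finset B) :
    0 ≤ subsetWeight p T := by
  have := sub_nonneg.2 hp1
  unfold subsetWeight
  positivity

lemma sum_subsetWeight_filter_subset (p : ℝ) (K : Finset B) :
    ∑ T with K ⊆ T, subsetWeight p T = p ^ #K := by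
  have hcompl : ∀ T : Finset B, ∏ b ∈ Tᶜ, (if b ∈ K then 0 else 1 - p) =
      if K ⊆ T then (1 - p) ^ #Tᶜ else 0 := by
    intro T
    split_ifs with hKT
    · exact prod_eq_pow_card fun b hb => if_neg fun hbK => mem_compl.1 hb (hKT hbK)
    · obtain ⟨b, hbK, hbT⟩ := not_subset.1 hKT
      exact prod_eq_zero (mem_compl.2 hbT) (if_pos hbK)
  have h := Fintype.prod_add (fun _ : B => p) (fun b => if b ∈ K then 0 else 1 - p)
  simp only [prod_const, hcompl, mul_ite, mul_zero] at h
  rw [sum_filter]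
  unfold subsetWeight
  rw [← h, ← prod_const, ← Fintype.prod_ite_mem K (fun _ => p)]
  exact prod_congr rfl fun b _ => by split_ifs <;> ring

lemma sum_subsetWeight (p : ℝ) : ∑ T : Finset B, subsetWeight p T = 1 := by
  simpa using sum_subsetWeight_filter_subset p (∅ : Finset B)

lemma sum_subsetWeight_mul_card_inter (p : ℝ) (N : Finset B) :
    ∑ T, subsetWeight p T * #(N ∩ T) = p * #N := by
  simp_rw [card_inter_eq_sum_ite, mul_sum, mul_boole]
  rw [sum_comm]
  simp_rw [← sum_filter, sum_subsetWeight_filter_subset]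
  simp [mul_comm]

lemma sum_subsetWeight_mul_sq_card_inter (p : ℝ) (N : Finset B) :
    ∑ T, subsetWeight p T * (#(N ∩ T) : ℝ) ^ 2 = p * #N + p ^ 2 * (#N ^ 2 - #N) := by
  simp_rw [sq_card_inter_eq_sum_ite, mul_sum, mul_boole]
  rw [sum_comm]
  simp_rw [sum_comm (s := univ), ← sum_filter, sum_subsetWeight_filter_subset]
  have h : ∀ b c : B, p ^ #{b, c} = p ^ 2 + if b = c then p - p ^ 2 else 0 := by
    intro b c
    by_cases hbc : b = c
    · simp [hbc]
    · simp [hbc, card_pair hbc]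
  simp_rw [h, sum_add_distrib, sum_ite_eq, sum_const]
  simp only [nsmul_eq_mul, sum_ite_mem, inter_self, sum_sub_distrib, sum_const]
  ring

lemma sum_subsetWeight_mul_sq_sub (p : ℝ) (N : Finset B) :
    ∑ T, subsetWeight p T * ((#(N ∩ T) : ℝ) - p * #N) ^ 2 = p * (1 - p) * #N := by
  have h : ∀ T, subsetWeight p T * ((#(N ∩ T) : ℝ) - p * #N) ^ 2 =
      subsetWeight p T * (#(N ∩ T) : ℝ) ^ 2 - 2 * p * #N * (subsetWeight p T * #(N ∩ T))
        + (p * #N) ^ 2 * subsetWeight p T := fun T => by ring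
  simp_rw [h, sum_add_distrib, sum_sub_distrib, ← mul_sum, sum_subsetWeight_mul_sq_card_inter,
    sum_subsetWeight_mul_card_inter, sum_subsetWeight]
  ring

lemma sum_subsetWeight_filter_le_abs_sub {p : ℝ} (hp0 : 0 ≤ p) (hp1 : p ≤ 1) (N : Finset B)
    {c : ℝ} (hc : 0 < c) :
    ∑ T with c ≤ |(#(N ∩ T) : ℝ) - p * #N|, subsetWeight p T ≤ p * (1 - p) * #N / c ^ 2 := by
  have hevent : ∀ T : Finset B,
      c ≤ |(#(N ∩ T) : ℝ) - p * #N| ↔ c ^ 2 ≤ ((#(N ∩ T) : ℝ) - p * #N) ^ 2 := fun T => by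
    rw [sq_le_sq, abs_of_pos hc]
  simp_rw [hevent, ← sum_subsetWeight_mul_sq_sub p N]
  exact sum_filter_le_sum_mul_div _ (fun T _ => subsetWeight_nonneg hp0 hp1 T)
    (fun T _ => sq_nonneg _) (by positivity)

lemma sum_subsetWeight_filter_card_inter_le {μ : ℝ} (hμ0 : 0 < μ) (hμ1 : μ < 1 / 4)
    (N : Finset B) (hN : 1 ≤ μ * #N) :
    ∑ T with (#(N ∩ T) : ℝ) ≤ μ * #N, subsetWeight (4 * μ) T ≤ 4 * (1 - 4 * μ) / 9 := by
  have hn : 0 < μ * #N := by linarith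
  calc ∑ T with (#(N ∩ T) : ℝ) ≤ μ * #N, subsetWeight (4 * μ) T
      ≤ ∑ T with 3 * (μ * #N) ≤ |(#(N ∩ T) : ℝ) - 4 * μ * #N|, subsetWeight (4 * μ) T := by
        refine sum_le_sum_of_subset_of_nonneg (monotone_filter_right _ fun T _ hT => ?_)
          fun T _ _ => subsetWeight_nonneg (by linarith) (by linarith) T
        rw [abs_sub_comm, le_abs]
        left
        linarith
    _ ≤ 4 * μ * (1 - 4 * μ) * #N / (3 * (μ * #N)) ^ 2 :=
        sum_subsetWeight_filter_le_abs_sub (by linarith) (by linarith) N (by positivity)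
    _ ≤ 4 * (1 - 4 * μ) / 9 := by
        rw [div_le_div_iff₀ (by positivity) (by norm_num)]
        nlinarith [mul_le_mul_of_nonneg_left hN (by nlinarith : (0:ℝ) ≤ 36 * μ * (1 - 4 * μ))]

lemma sum_subsetWeight_filter_lt_card_le {μ : ℝ} (hμ0 : 0 < μ) (hμ1 : μ < 1 / 4)
    (hB : 1 ≤ μ * Fintype.card B) :
    ∑ T : Finset B with 8 * μ * Fintype.card B < (#T : ℝ), subsetWeight (4 * μ) T ≤
      (1 - 4 * μ) / 4 := by
  have hn : 0 < μ * Fintype.card B := by linarith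
  calc ∑ T : Finset B with 8 * μ * Fintype.card B < (#T : ℝ), subsetWeight (4 * μ) T
      ≤ ∑ T with 4 * (μ * #(univ : Finset B)) ≤ |(#(univ ∩ T) : ℝ) - 4 * μ * #(univ : Finset B)|,
          subsetWeight (4 * μ) T := by
        refine sum_le_sum_of_subset_of_nonneg (monotone_filter_right _ fun T _ hT => ?_)
          fun T _ _ => subsetWeight_nonneg (by linarith) (by linarith) T
        rw [univ_inter, card_univ, le_abs]
        left
        linarith
    _ ≤ 4 * μ * (1 - 4 * μ) * #(univ : Finset B) / (4 * (μ * #(univ : Finset B))) ^ 2 :=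
        sum_subsetWeight_filter_le_abs_sub (by linarith) (by linarith) univ (by positivity)
    _ ≤ (1 - 4 * μ) / 4 := by
        rw [card_univ, div_le_div_iff₀ (by positivity) (by norm_num)]
        nlinarith [mul_le_mul_of_nonneg_left hB (by nlinarith : (0:ℝ) ≤ 16 * μ * (1 - 4 * μ))]

end RandomSubset

section Saturation

variable {A B : Type*} [Fintype A] [Fintype B] [DecidableEq B]

noncomputable def saturatedDegree (N : A → Finset B) (μ : ℝ) (T : Finset B) : ℝ :=
  ∑ a with μ * #(N a) < #(N a ∩ T), (#(N a) : ℝ)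

lemma le_sum_subsetWeight_mul_saturatedDegree {μ : ℝ} (hμ0 : 0 < μ) (hμ1 : μ < 1 / 4)
    (N : A → Finset B) (hN : ∀ a, 1 ≤ μ * #(N a)) :
    (1 - 4 * (1 - 4 * μ) / 9) * ∑ a, (#(N a) : ℝ) ≤
      ∑ T, subsetWeight (4 * μ) T * saturatedDegree N μ T := by
  have hsat : ∀ a, 1 - 4 * (1 - 4 * μ) / 9 ≤
      ∑ T with μ * #(N a) < #(N a ∩ T), subsetWeight (4 * μ) T := by
    intro a
    have hsplit := sum_filter_add_sum_filter_not univ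
      (fun T => μ * #(N a) < (#(N a ∩ T) : ℝ)) (subsetWeight (4 * μ))
    simp only [not_lt, sum_subsetWeight] at hsplit
    linarith [sum_subsetWeight_filter_card_inter_le hμ0 hμ1 (N a) (hN a)]
  calc (1 - 4 * (1 - 4 * μ) / 9) * ∑ a, (#(N a) : ℝ)
      ≤ ∑ a, (#(N a) : ℝ) * ∑ T with μ * #(N a) < #(N a ∩ T), subsetWeight (4 * μ) T := by
        rw [mul_sum]
        exact sum_le_sum fun a _ => by
          rw [mul_comm]
          exact mul_le_mul_of_nonneg_left (hsat a) (Nat.cast_nonneg _)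
    _ = ∑ T, subsetWeight (4 * μ) T * saturatedDegree N μ T := by
        simp_rw [saturatedDegree, mul_sum, sum_filter]
        rw [sum_comm]
        exact sum_congr rfl fun a _ => sum_congr rfl fun T _ => by split_ifs <;> ring

theorem exists_card_le_and_lt_saturatedDegree [Nonempty A] {μ : ℝ} (hμ0 : 0 < μ)
    (hμ1 : μ < 1 / 4) (N : A → Finset B) (hN : ∀ a, 1 ≤ μ * #(N a)) :
    ∃ T : Finset B, (#T : ℝ) ≤ 8 * μ * Fintype.card B ∧
      (∑ a, (#(N a) : ℝ)) / 4 < saturatedDegree N μ T := by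
  set D := ∑ a, (#(N a) : ℝ)
  have hD : 0 < D := sum_pos (fun a _ => by nlinarith [hN a]) univ_nonempty
  have hB : 1 ≤ μ * Fintype.card B := by
    obtain ⟨a⟩ := ‹Nonempty A›
    exact (hN a).trans (by gcongr; exact card_le_univ _)
  set w := subsetWeight (B := B) (4 * μ)
  have hw : ∀ T, 0 ≤ w T := subsetWeight_nonneg (by linarith) (by linarith)
  -- Penalising the sets that are too large by the whole of `D` keeps the mean above `D / 4`.
  set F : Finset B → ℝ := fun T =>
    saturatedDegree N μ T - if 8 * μ * Fintype.card B < (#T : ℝ) then D else 0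
  have hF : ∑ T, w T * (D / 4) < ∑ T, w T * F T := by
    have hbad : ∑ T, w T * (if 8 * μ * Fintype.card B < (#T : ℝ) then D else 0) =
        (∑ T with 8 * μ * Fintype.card B < (#T : ℝ), w T) * D := by
      simp_rw [mul_ite, mul_zero, ← sum_filter, sum_mul]
    have hmean := le_sum_subsetWeight_mul_saturatedDegree hμ0 hμ1 N hN
    have htail := sum_subsetWeight_filter_lt_card_le hμ0 hμ1 hB
    simp_rw [F, mul_sub, sum_sub_distrib, hbad, ← sum_mul, w, sum_subsetWeight]
    nlinarith
  obtain ⟨T, -, hT⟩ := exists_lt_of_sum_lt hF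
  have hT : D / 4 < F T := lt_of_mul_lt_mul_left hT (hw T)
  have hsat : saturatedDegree N μ T ≤ D :=
    sum_le_sum_of_subset_of_nonneg (filter_subset _ _) fun _ _ _ => Nat.cast_nonneg _
  simp only [F] at hT
  refine ⟨T, ?_, ?_⟩
  · by_contra! hbig
    rw [if_pos hbig] at hT
    linarith
  · split_ifs at hT <;> linarith

end Saturation

lemma Finset.card_eq_sum_card_filter_prodMk {A B : Type*} [Fintype A] [Fintype B]
    [DecidableEq A] [DecidableEq B] (E : Finset (A × B)) :
    #E = ∑ a, #{b | (a, b) ∈ E} := by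
  simp_rw [card_filter]
  rw [← Fintype.sum_prod_type (fun x => if x ∈ E then 1 else 0), ← card_filter, filter_univ_mem]

theorem stmt_10_general {A B : Type} [Fintype A] [Fintype B] [DecidableEq A] [DecidableEq B]
    (E : Finset (A × B)) (μ : ℝ) (hμ0 : 0 < μ) (hμ1 : μ < 1/4)
    (hdeg : ∀ a : A,
      1 / μ ≤ ((Finset.univ.filter fun b : B => (a, b) ∈ E).card : ℝ)) :
    ∃ Bstar : Finset B,
      (Bstar.card : ℝ) ≤ 8 * μ * Fintype.card B ∧
      (E.card : ℝ) / 4 ≤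
        ∑ a ∈ Finset.univ.filter (fun a : A =>
            μ * ((Finset.univ.filter fun b : B => (a, b) ∈ E).card : ℝ) <
              (((Finset.univ.filter fun b : B => (a, b) ∈ E) ∩ Bstar).card : ℝ)),
          ((Finset.univ.filter fun b : B => (a, b) ∈ E).card : ℝ) := by
  cases isEmpty_or_nonempty A
  · exact ⟨∅, by simp only [card_empty, Nat.cast_zero]; positivity, by simp [eq_empty_of_isEmpty E]⟩
  have hN : ∀ a, 1 ≤ μ * #{b | (a, b) ∈ E} := fun a => by
    simpa only [div_le_iff₀ hμ0, mul_comm] using hdeg a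
  obtain ⟨T, hT, hsat⟩ := exists_card_le_and_lt_saturatedDegree hμ0 hμ1 _ hN
  refine ⟨T, hT, ?_⟩
  rw [card_eq_sum_card_filter_prodMk, Nat.cast_sum]
  exact hsat.le

/-- under `0 < μ < 1/4`, degrees at least `1/μ`, and `|A| ≤ |E|/4`, there
is `B* ⊆ B` with `|B*| ≤ 8μ|B|` such that the saturated vertices
`S = {a : |N(a) ∩ B*| > μ·d_a}` carry at least `|E|/4` edges. -/
theorem stmt_10 {A B : Type} [Fintype A] [Fintype B] [DecidableEq A] [DecidableEq B]
    (E : Finset (A × B)) (μ : ℝ) (hμ0 : 0 < μ) (hμ1 : μ < 1/4)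
    (hdeg : ∀ a : A,
      1 / μ ≤ ((Finset.univ.filter fun b : B => (a, b) ∈ E).card : ℝ))
    (hA : (Fintype.card A : ℝ) ≤ (E.card : ℝ) / 4) :
    ∃ Bstar : Finset B,
      (Bstar.card : ℝ) ≤ 8 * μ * Fintype.card B ∧
      (E.card : ℝ) / 4 ≤
        ∑ a ∈ Finset.univ.filter (fun a : A =>
            μ * ((Finset.univ.filter fun b : B => (a, b) ∈ E).card : ℝ) <
              (((Finset.univ.filter fun b : B => (a, b) ∈ E) ∩ Bstar).card : ℝ)),
          ((Finset.univ.filter fun b : B => (a, b) ∈ E).card : ℝ) :=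
  stmt_10_general E μ hμ0 hμ1 hdeg
end

section
/- Let (k̃, ñ, {S_{i,j}}) be a Matrix Tiling instance with k̃ ≥ 2, and let l ≥ 0 be a real number. If some assignment to the associated projection game leaves fewer than l/2 of its edges unsatisfied, then the Matrix Tiling instance has a valid partial solution with fewer than l entries equal to ★; that is, there is a choice s_{i,j} ∈ S_{i,j} ∪ {★} for each (i,j) ∈ [k̃] × [k̃] such that for all i ∈ [k̃], j ∈ [k̃−1] with s_{i,j} ≠ ★ and s_{i,j+1} ≠ ★ one has (s_{i,j})₁ = (s_{i,j+1})₁, for all i ∈ [k̃−1], j ∈ [k̃] with s_{i,j} ≠ ★ and s_{i+1,j} ≠ ★ one has (s_{i,j})₂ = (s_{i+1,j})₂, and the number of (i,j) with s_{i,j} = ★ is less than l. -/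
/-!
Call a cell `(i, j)` good when its label `φA a_{i,j}` lies in `S_{i,j}` and every edge at
`a_{i,j}` is satisfied, and star every other cell. Two adjacent good cells project to the same
value at their common `B`-vertex, so the good labels form a valid partial solution. Every starred
cell is charged to an unsatisfied edge: either an edge at the cell itself, or, when its label is
outside `S_{i,j}`, one of the two edges at a horizontal vertex `b_{i,t+1/2}` next to it, which
cannot both be satisfied: a label outside `S` projects to `◆` from the left and to `■` from the
right, a symbol the other endpoint never sends there. Each edge is charged by at most two cells, so there are at most
twice as many starred cells as unsatisfied edges.
-/

open Finset

section LocalSatisfaction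

variable {α β σA σB : Type*}

def IsLocallySatisfied (E : Finset (α × β)) (π : α × β → σA → σB) (φA : α → σA)
    (φB : β → σB) (a : α) : Prop :=
  ∀ e ∈ E, e.1 = a → π e (φA a) = φB e.2

theorem exists_unsat_of_not_isLocallySatisfied [DecidableEq σB] {E : Finset (α × β)}
    {π : α × β → σA → σB} {φA : α → σA} {φB : β → σB} {a : α}
    (h : ¬ IsLocallySatisfied E π φA φB a) :
    ∃ e ∈ E.filter fun e => π e (φA e.1) ≠ φB e.2, e.1 = a := by
  simp only [IsLocallySatisfied, not_forall] at h
  obtain ⟨e, he, rfl, hne⟩ := h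
  exact ⟨e, mem_filter.2 ⟨he, hne⟩, rfl⟩

end LocalSatisfaction

namespace MatrixTiling

abbrev Edge := (ℕ × ℕ) × ((ℕ × ℕ) ⊕ (ℕ × ℕ))

def edges (k : ℕ) : Finset Edge :=
  ((Icc 1 (k - 1) ×ˢ Icc 1 k).biUnion fun p =>
    ({((p.1, p.2), Sum.inl p), ((p.1 + 1, p.2), Sum.inl p)} : Finset Edge)) ∪
  ((Icc 1 k ×ˢ Icc 1 (k - 1)).biUnion fun p =>
    ({((p.1, p.2), Sum.inr p), ((p.1, p.2 + 1), Sum.inr p)} : Finset Edge))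

def proj (S : ℕ → ℕ → Finset (ℕ × ℕ)) : Edge → ℕ × ℕ → ℕ ⊕ Bool
  | ((x, y), .inl (z, _)), σ =>
      if σ ∈ S x y then .inl σ.2 else if z < x then .inr true else .inr false
  | ((x, y), .inr (_, t)), σ =>
      if σ ∈ S x y then .inl σ.1 else if t < y then .inr true else .inr false

def chargedCells : Edge → Finset (ℕ × ℕ)
  | (a, Sum.inl _) => {a}
  | (_, Sum.inr (z, t)) => {(z, t), (z, t + 1)}

variable {k : ℕ} {S : ℕ → ℕ → Finset (ℕ × ℕ)}

section Proj

variable (S) (i j t : ℕ) (σ : ℕ × ℕ)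

theorem proj_inr_left :
    proj S ((i, t), .inr (i, t)) σ = if σ ∈ S i t then .inl σ.1 else .inr false := by
  simp [proj]

theorem proj_inr_right :
    proj S ((i, t + 1), .inr (i, t)) σ = if σ ∈ S i (t + 1) then .inl σ.1 else .inr true := by
  simp [proj]

theorem proj_inl_top :
    proj S ((i, j), .inl (i, j)) σ = if σ ∈ S i j then .inl σ.2 else .inr false := by
  simp [proj]

theorem proj_inl_bottom :
    proj S ((i + 1, j), .inl (i, j)) σ = if σ ∈ S (i + 1) j then .inl σ.2 else .inr true := by
  simp [proj]

end Proj

theorem proj_inr_left_ne_right {i t : ℕ} {σ τ : ℕ × ℕ} (h : σ ∉ S i t ∨ τ ∉ S i (t + 1)) :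
    proj S ((i, t), .inr (i, t)) σ ≠ proj S ((i, t + 1), .inr (i, t)) τ := by
  rw [proj_inr_left, proj_inr_right]
  rcases h with h | h <;> split_ifs <;> simp_all

theorem mem_edges_inr {i t : ℕ} (hi : i ∈ Icc 1 k) (ht : t ∈ Icc 1 (k - 1)) :
    ((i, t), .inr (i, t)) ∈ edges k ∧ ((i, t + 1), .inr (i, t)) ∈ edges k := by
  simp only [mem_Icc] at hi ht
  constructor <;> exact mem_union_right _ (mem_biUnion.2 ⟨(i, t), by simp [hi, ht], by simp⟩)

theorem mem_edges_inl {i j : ℕ} (hi : i ∈ Icc 1 (k - 1)) (hj : j ∈ Icc 1 k) :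
    ((i, j), .inl (i, j)) ∈ edges k ∧ ((i + 1, j), .inl (i, j)) ∈ edges k := by
  simp only [mem_Icc] at hi hj
  constructor <;> exact mem_union_left _ (mem_biUnion.2 ⟨(i, j), by simp [hi, hj], by simp⟩)

theorem fst_mem_chargedCells {e : Edge} (he : e ∈ edges k) : e.1 ∈ chargedCells e := by
  simp only [edges, mem_union, mem_biUnion, mem_insert, mem_singleton] at he
  rcases he with ⟨p, -, rfl | rfl⟩ | ⟨p, -, rfl | rfl⟩ <;> simp [chargedCells]

theorem card_chargedCells_le (e : Edge) : #(chargedCells e) ≤ 2 := by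
  rcases e with ⟨a, b | ⟨z, t⟩⟩
  · simp [chargedCells]
  · exact (card_insert_le _ _).trans (by simp)

open Classical in
noncomputable def extractSolution (S : ℕ → ℕ → Finset (ℕ × ℕ)) (E : Finset Edge)
    (π : Edge → ℕ × ℕ → ℕ ⊕ Bool) (φA : ℕ × ℕ → ℕ × ℕ) (φB : (ℕ × ℕ) ⊕ (ℕ × ℕ) → ℕ ⊕ Bool)
    (i j : ℕ) : Option (ℕ × ℕ) :=
  if φA (i, j) ∈ S i j ∧ IsLocallySatisfied E π φA φB (i, j) then some (φA (i, j)) else none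

section ExtractSolution

variable {E : Finset Edge} {π : Edge → ℕ × ℕ → ℕ ⊕ Bool} {φA : ℕ × ℕ → ℕ × ℕ}
  {φB : (ℕ × ℕ) ⊕ (ℕ × ℕ) → ℕ ⊕ Bool} {i j : ℕ}

theorem extractSolution_eq_some {v : ℕ × ℕ} (h : extractSolution S E π φA φB i j = some v) :
    v = φA (i, j) ∧ φA (i, j) ∈ S i j ∧ IsLocallySatisfied E π φA φB (i, j) := by
  unfold extractSolution at h
  split_ifs at h with hc
  exact ⟨(Option.some.inj h).symm, hc⟩

theorem extractSolution_eq_none (h : extractSolution S E π φA φB i j = none) :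
    ¬ (φA (i, j) ∈ S i j ∧ IsLocallySatisfied E π φA φB (i, j)) := by
  unfold extractSolution at h
  split_ifs at h with hc
  exact hc

end ExtractSolution

variable {φA : ℕ × ℕ → ℕ × ℕ} {φB : (ℕ × ℕ) ⊕ (ℕ × ℕ) → ℕ ⊕ Bool}

theorem extractSolution_horizontal {i j : ℕ} {v w : ℕ × ℕ} (hi : i ∈ Icc 1 k)
    (hj : j ∈ Icc 1 (k - 1)) (hv : extractSolution S (edges k) (proj S) φA φB i j = some v)
    (hw : extractSolution S (edges k) (proj S) φA φB i (j + 1) = some w) : v.1 = w.1 := by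
  obtain ⟨rfl, hvS, hvsat⟩ := extractSolution_eq_some hv
  obtain ⟨rfl, hwS, hwsat⟩ := extractSolution_eq_some hw
  obtain ⟨hleft, hright⟩ := mem_edges_inr hi hj
  have hl := hvsat _ hleft rfl
  have hr := hwsat _ hright rfl
  rw [proj_inr_left, if_pos hvS] at hl
  rw [proj_inr_right, if_pos hwS] at hr
  exact Sum.inl.inj (hl.trans hr.symm)

theorem extractSolution_vertical {i j : ℕ} {v w : ℕ × ℕ} (hi : i ∈ Icc 1 (k - 1))
    (hj : j ∈ Icc 1 k) (hv : extractSolution S (edges k) (proj S) φA φB i j = some v)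
    (hw : extractSolution S (edges k) (proj S) φA φB (i + 1) j = some w) : v.2 = w.2 := by
  obtain ⟨rfl, hvS, hvsat⟩ := extractSolution_eq_some hv
  obtain ⟨rfl, hwS, hwsat⟩ := extractSolution_eq_some hw
  obtain ⟨htop, hbot⟩ := mem_edges_inl hi hj
  have ht := hvsat _ htop rfl
  have hb := hwsat _ hbot rfl
  rw [proj_inl_top, if_pos hvS] at ht
  rw [proj_inl_bottom, if_pos hwS] at hb
  exact Sum.inl.inj (ht.trans hb.symm)

abbrev unsat (k : ℕ) (S : ℕ → ℕ → Finset (ℕ × ℕ)) (φA : ℕ × ℕ → ℕ × ℕ)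
    (φB : (ℕ × ℕ) ⊕ (ℕ × ℕ) → ℕ ⊕ Bool) : Finset Edge :=
  (edges k).filter fun e => proj S e (φA e.1) ≠ φB e.2

theorem exists_unsat_horizontal_of_not_mem (hk : 2 ≤ k) {i j : ℕ} (hi : i ∈ Icc 1 k)
    (hj : j ∈ Icc 1 k) (hc : φA (i, j) ∉ S i j) :
    ∃ e ∈ unsat k S φA φB, (i, j) ∈ chargedCells e := by
  obtain ⟨t, ht, hjt⟩ : ∃ t ∈ Icc 1 (k - 1), j = t ∨ j = t + 1 := by
    simp only [mem_Icc] at hj ⊢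
    exact ⟨min j (k - 1), by omega, by omega⟩
  have hcell : (i, j) ∈ ({(i, t), (i, t + 1)} : Finset (ℕ × ℕ)) := by
    rcases hjt with rfl | rfl <;> simp
  obtain ⟨hleft, hright⟩ := mem_edges_inr hi ht
  have hne : proj S ((i, t), .inr (i, t)) (φA (i, t)) ≠
      proj S ((i, t + 1), .inr (i, t)) (φA (i, t + 1)) :=
    proj_inr_left_ne_right (by rcases hjt with rfl | rfl <;> simp [hc])
  by_cases hl : proj S ((i, t), .inr (i, t)) (φA (i, t)) = φB (.inr (i, t))
  · exact ⟨_, mem_filter.2 ⟨hright, fun hr => hne (hl.trans hr.symm)⟩, hcell⟩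
  · exact ⟨_, mem_filter.2 ⟨hleft, hl⟩, hcell⟩

theorem exists_unsat_of_extractSolution_eq_none (hk : 2 ≤ k) {i j : ℕ} (hi : i ∈ Icc 1 k)
    (hj : j ∈ Icc 1 k) (hnone : extractSolution S (edges k) (proj S) φA φB i j = none) :
    ∃ e ∈ unsat k S φA φB, (i, j) ∈ chargedCells e := by
  by_cases hS : φA (i, j) ∈ S i j
  · obtain ⟨e, he, he1⟩ := exists_unsat_of_not_isLocallySatisfied
      fun hsat => extractSolution_eq_none hnone ⟨hS, hsat⟩
    exact ⟨e, he, he1 ▸ fst_mem_chargedCells (mem_filter.1 he).1⟩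
  · exact exists_unsat_horizontal_of_not_mem hk hi hj hS

theorem card_extractSolution_eq_none_le (hk : 2 ≤ k) :
    #((Icc 1 k ×ˢ Icc 1 k).filter fun c =>
      extractSolution S (edges k) (proj S) φA φB c.1 c.2 = none) ≤ 2 * #(unsat k S φA φB) :=
  calc _ ≤ #((unsat k S φA φB).biUnion chargedCells) := by
        refine card_le_card fun c hc => ?_
        obtain ⟨hc, hnone⟩ := mem_filter.1 hc
        obtain ⟨e, he, hce⟩ :=
          exists_unsat_of_extractSolution_eq_none hk (mem_product.1 hc).1 (mem_product.1 hc).2 hnone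
        exact mem_biUnion.2 ⟨e, he, hce⟩
    _ ≤ #(unsat k S φA φB) * 2 :=
        card_biUnion_le_card_mul _ _ _ fun e _ => card_chargedCells_le e
    _ = 2 * #(unsat k S φA φB) := mul_comm _ _

end MatrixTiling

open MatrixTiling in
theorem stmt_15 (k : ℕ) (hk : 2 ≤ k)
    (S : ℕ → ℕ → Finset (ℕ × ℕ))
    (Egame : Finset ((ℕ × ℕ) × ((ℕ × ℕ) ⊕ (ℕ × ℕ))))
    (hEgame : Egame =
      (((Finset.Icc 1 (k - 1)) ×ˢ (Finset.Icc 1 k)).biUnion fun p =>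
        ({((p.1, p.2), Sum.inl p), ((p.1 + 1, p.2), Sum.inl p)} :
          Finset ((ℕ × ℕ) × ((ℕ × ℕ) ⊕ (ℕ × ℕ))))) ∪
      (((Finset.Icc 1 k) ×ˢ (Finset.Icc 1 (k - 1))).biUnion fun p =>
        ({((p.1, p.2), Sum.inr p), ((p.1, p.2 + 1), Sum.inr p)} :
          Finset ((ℕ × ℕ) × ((ℕ × ℕ) ⊕ (ℕ × ℕ))))))
    (π : ((ℕ × ℕ) × ((ℕ × ℕ) ⊕ (ℕ × ℕ))) → (ℕ × ℕ) → (ℕ ⊕ Bool))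
    (hπ : π = fun e σ =>
      match e.2 with
      | Sum.inl zt =>
          if σ ∈ S e.1.1 e.1.2 then Sum.inl σ.2
          else if zt.1 < e.1.1 then Sum.inr true else Sum.inr false
      | Sum.inr zt =>
          if σ ∈ S e.1.1 e.1.2 then Sum.inl σ.1
          else if zt.2 < e.1.2 then Sum.inr true else Sum.inr false)
    (l : ℝ)
    (φA : ℕ × ℕ → ℕ × ℕ) (φB : (ℕ × ℕ) ⊕ (ℕ × ℕ) → ℕ ⊕ Bool)
    (hunsat : ((Egame.filter fun e => π e (φA e.1) ≠ φB e.2).card : ℝ) < l / 2) :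
    ∃ sol : ℕ → ℕ → Option (ℕ × ℕ),
      (∀ i ∈ Finset.Icc 1 k, ∀ j ∈ Finset.Icc 1 k, ∀ v : ℕ × ℕ,
        sol i j = some v → v ∈ S i j) ∧
      (∀ i ∈ Finset.Icc 1 k, ∀ j ∈ Finset.Icc 1 (k - 1), ∀ v w : ℕ × ℕ,
        sol i j = some v → sol i (j + 1) = some w → v.1 = w.1) ∧
      (∀ i ∈ Finset.Icc 1 (k - 1), ∀ j ∈ Finset.Icc 1 k, ∀ v w : ℕ × ℕ,
        sol i j = some v → sol (i + 1) j = some w → v.2 = w.2) ∧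
      ((((Finset.Icc 1 k) ×ˢ (Finset.Icc 1 k)).filter fun p =>
          sol p.1 p.2 = none).card : ℝ) < l := by
  obtain rfl : Egame = edges k := hEgame
  obtain rfl : π = proj S := by
    subst hπ
    funext e σ
    obtain ⟨⟨x, y⟩, ⟨z, t⟩ | ⟨z, t⟩⟩ := e <;> rfl
  refine ⟨extractSolution S (edges k) (proj S) φA φB, ?_, ?_, ?_, ?_⟩
  · intro i _ j _ v hv
    obtain ⟨rfl, hS, -⟩ := extractSolution_eq_some hv
    exact hS
  · exact fun i hi j hj v w => extractSolution_horizontal hi hj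
  · exact fun i hi j hj v w => extractSolution_vertical hi hj
  · have hcard := card_extractSolution_eq_none_le (S := S) (φA := φA) (φB := φB) hk
    rify at hcard
    linarith
end
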